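/- arXiv:1006.4774 — 10 statements merged into one kernel-verified Lean document; each statement's English description precedes it below -/
import Mathlib

section
/- Let K be a field and a, b, c, d ∈ K with a + b ≠ 0. Put a' = a + b, b' = b·c/(a + b), c' = a·c/(a + b). Assume 1 − d ≠ 0, 1 − c/(1 − d) ≠ 0, 1 − c' − d ≠ 0 and 1 − b'/(1 − c' − d) ≠ 0. Then a + b/(1 − c/(1 − d)) = a'/(1 − b'/(1 − c' − d)). -/
/-! Both sides equal `((a + b) * (1 - d) - a * c) / (1 - d - c)`: on the left clear the inner
denominator `1 - d`; on the right the factor `a + b` cancels twice, the second time through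
`(a + b) * (1 - d) - a * c - b * c = (a + b) * (1 - d - c)`. -/

theorem add_div_one_sub_div {K : Type*} [Field K] {a b c D : K} (hD : D ≠ 0) (h : D - c ≠ 0) :
    a + b / (1 - c / D) = ((a + b) * D - a * c) / (D - c) := by
  rw [one_sub_div hD, div_div_eq_mul_div, add_div' _ _ _ h]
  ring

theorem div_one_sub_div_div_sub_div {K : Type*} [Field K] {a b c D : K} (hab : a + b ≠ 0)
    (hE : D - a * c / (a + b) ≠ 0) :
    (a + b) / (1 - b * c / (a + b) / (D - a * c / (a + b))) =
      ((a + b) * D - a * c) / (D - c) := by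
  have hE_eq : D - a * c / (a + b) = ((a + b) * D - a * c) / (a + b) := by field_simp
  have hE' : (a + b) * D - a * c ≠ 0 := (div_ne_zero_iff.mp (hE_eq ▸ hE)).1
  rw [hE_eq, div_div_div_cancel_right₀ hab, one_sub_div hE', div_div_eq_mul_div,
    show (a + b) * D - a * c - b * c = (a + b) * (D - c) by ring, mul_div_mul_left _ _ hab]

theorem stmt1_general {K : Type*} [Field K] (a b c d : K)
    (hab : a + b ≠ 0)
    (hd : 1 - d ≠ 0)
    (h1 : 1 - c / (1 - d) ≠ 0)
    (h2 : 1 - (a * c / (a + b)) - d ≠ 0) :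
    a + b / (1 - c / (1 - d)) =
      (a + b) / (1 - (b * c / (a + b)) / (1 - (a * c / (a + b)) - d)) := by
  have hdc : 1 - d - c ≠ 0 := (div_ne_zero_iff.mp (one_sub_div hd ▸ h1)).1
  rw [sub_right_comm] at h2 ⊢
  rw [add_div_one_sub_div hd hdc, div_one_sub_div_div_sub_div hab h2]

/-- Commutative continued-fraction rearrangement lemma (Lemma 2.9, `rear2lem`). -/
theorem stmt1 {K : Type*} [Field K] (a b c d : K)
    (hab : a + b ≠ 0)
    (hd : 1 - d ≠ 0)
    (h1 : 1 - c / (1 - d) ≠ 0)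
    (h2 : 1 - (a * c / (a + b)) - d ≠ 0)
    (h3 : 1 - (b * c / (a + b)) / (1 - (a * c / (a + b)) - d) ≠ 0) :
    a + b / (1 - c / (1 - d)) =
      (a + b) / (1 - (b * c / (a + b)) / (1 - (a * c / (a + b)) - d)) :=
  stmt1_general a b c d hab hd h1 h2
end

section
/- Let D be a division ring and a, b, c, u ∈ D with 1 − u ≠ 0 and 1 − c − u ≠ 0. Then 1 − (1 − u)⁻¹·c ≠ 0 and a + b + (1 − c − u)⁻¹·c·b = a + (1 − (1 − u)⁻¹·c)⁻¹·b. -/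
/-- Noncommutative rearrangement identity (3.6) in a division ring. -/
theorem stmt3 {D : Type*} [DivisionRing D] (a b c u : D)
    (hu : 1 - u ≠ 0) (hcu : 1 - c - u ≠ 0) :
    1 - (1 - u)⁻¹ * c ≠ 0 ∧
      a + b + (1 - c - u)⁻¹ * c * b = a + (1 - (1 - u)⁻¹ * c)⁻¹ * b := by
  have key : 1 - (1 - u)⁻¹ * c = (1 - u)⁻¹ * (1 - c - u) := by
    rw [eq_inv_mul_iff_mul_eq₀ hu, mul_sub, mul_one, ← mul_assoc,
      mul_inv_cancel₀ hu, one_mul]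
    abel
  have hne : 1 - (1 - u)⁻¹ * c ≠ 0 := by
    rw [key]
    exact mul_ne_zero (inv_ne_zero hu) hcu
  refine ⟨hne, ?_⟩
  have h2 : (1 - u) * b = (1 - c - u) * b + c * b := by noncomm_ring
  rw [key, mul_inv_rev, inv_inv, mul_assoc _ (1 - u) b, h2, mul_add,
    ← mul_assoc, inv_mul_cancel₀ hcu, one_mul, mul_assoc]
  noncomm_ring
end

section
/- With the notation of the context, let m be a Motzkin path and 1 ≤ i ≤ r−1 a mutation site satisfying case (i) or case (ii), and let m' and y' be the mutated Motzkin path and weights. Assume (genericity) that every element of K inverted in forming ŷ(m), ŷ(m') (the latter built from y'), y', and in the recursive evaluation of J^{(r)}(ŷ(m)) and J^{(r)}(ŷ(m')) is nonzero. Then: if i ≥ 2, J^{(r)}(ŷ(m)) = J^{(r)}(ŷ(m')); and if i = 1, J^{(r)}(ŷ(m)) = 1 + t·y'_1·J^{(r)}(ŷ(m')). Consequently, setting F_m(t) = 1 + t·y_1·J^{(r)}(ŷ(m)) and F_{m'}(t) = 1 + t·y'_1·J^{(r)}(ŷ(m')), one has F_m(t) = F_{m'}(t) for i ≥ 2, and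 F_m(t) = 1 + t·y_1·F_{m'}(t) for i = 1. -/
/-- The Jacobi-type finite continued fraction `J^{(r)}(x_1,…,x_{2r+1})`, consuming the
`2r+1` variables `x_1,…,x_{2r+1}` and bottoming out at `1/(1 - x_{2r+1})`:
`Jfrac 0 x = 1/(1 - x 1)` and `Jfrac (k+1) x = 1/(1 - x 1 - x 2 * Jfrac k (x ∘ (·+2)))`,
so that `Jfrac r x = J^{(r)}(x_1,…,x_{2r+1})`. -/
def Jfrac {K : Type*} [Field K] : ℕ → (ℕ → K) → K
  | 0, x => 1 / (1 - x 1)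
  | (k+1), x => 1 / (1 - x 1 - x 2 * Jfrac k (fun i => x (i + 2)))

/-- Genericity of the continued fraction: all denominators appearing in the recursive
evaluation of `Jfrac` are nonzero. -/
def JfracGen {K : Type*} [Field K] : ℕ → (ℕ → K) → Prop
  | 0, x => 1 - x 1 ≠ 0
  | (k+1), x => (1 - x 1 - x 2 * Jfrac k (fun i => x (i + 2)) ≠ 0) ∧
      JfracGen k (fun i => x (i + 2))

/-- The hatted weights `ŷ(m)` attached to a Motzkin path `m` and weights `y₁,…,y_{2r+1}`:
for `1 ≤ u ≤ r-1`,
`ŷ_{2u} = t·y_{2u}·(t·y_{2u+1})^{m_{u+1}-m_u}`, and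
`ŷ_{2u-1} = t·y_{2u-1} - y_{2u}/y_{2u+1}` if `m_{u+1} = m_u - 1`,
`ŷ_{2u-1} = t·(y_{2u-1} + y_{2u})` if `m_{u+1} = m_u + 1`, `ŷ_{2u-1} = t·y_{2u-1}` otherwise;
while `ŷ_j = t·y_j` for `j ≥ 2r-1`. -/
def yhat {K : Type*} [Field K] (r : ℕ) (t : K) (y : ℕ → K) (m : ℕ → ℤ) : ℕ → K :=
  fun j =>
    if j % 2 = 1 then
      if (j + 1) / 2 + 1 ≤ r then
        if m ((j + 1) / 2 + 1) = m ((j + 1) / 2) - 1 then t * y j - y (j + 1) / y (j + 2)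
        else if m ((j + 1) / 2 + 1) = m ((j + 1) / 2) + 1 then t * (y j + y (j + 1))
        else t * y j
      else t * y j
    else
      if j / 2 + 1 ≤ r then
        t * y j * (t * y (j + 1)) ^ (m (j / 2 + 1) - m (j / 2))
      else t * y j

/-!
The mutation `μ_i` changes the hatted weights `ŷ_j` only for `2i-3 ≤ j ≤ 2i+2`. Let `W` be the
common continued fraction of the weights beyond `ŷ_{2i+2}`. In both cases, clearing denominators
shows that the two-level fraction `1/(1 - ŷ_{2i-1} - ŷ_{2i}/(1 - ŷ_{2i+1} - ŷ_{2i+2}·W))` equals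
`1 + t·y'_{2i-1}` times its mutated counterpart; for `i = 1` this is already the claim. For `i ≥ 2`
the factor is absorbed one level up, because `1 - a - b·(1 + p·X) = 1 - (a + b) - b·p·X`, and
`ŷ'_{2i-3} = ŷ_{2i-3} + ŷ_{2i-2}`, `ŷ'_{2i-2} = ŷ_{2i-2}·t·y'_{2i-1}` because `m_{i-1} = m_i`.
-/

section

variable {K : Type*} [Field K]

theorem Jfrac_congr : ∀ (n : ℕ) {x x' : ℕ → K},
    (∀ j, 1 ≤ j → j ≤ 2 * n + 1 → x j = x' j) → Jfrac n x = Jfrac n x'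
  | 0, x, x', h => by simp only [Jfrac, h 1 le_rfl (by omega)]
  | n + 1, x, x', h => by
    simp only [Jfrac, h 1 le_rfl (by omega), h 2 (by omega) (by omega),
      Jfrac_congr n fun j _ _ => h (j + 2) (by omega) (by omega)]

theorem JfracGen.shift : ∀ (k : ℕ) {n : ℕ} {x : ℕ → K}, JfracGen (k + n) x →
    JfracGen n fun j => x (j + 2 * k)
  | 0, n, x, h => by simpa using h
  | k + 1, n, x, h => by
    rw [show k + 1 + n = k + n + 1 by omega] at h
    simpa only [add_assoc, ← mul_add_one] using JfracGen.shift k h.2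

theorem Jfrac_add_congr : ∀ (k : ℕ) {n : ℕ} {x x' : ℕ → K},
    (∀ j, 1 ≤ j → j ≤ 2 * k → x j = x' j) →
    Jfrac n (fun j => x (j + 2 * k)) = Jfrac n (fun j => x' (j + 2 * k)) →
    Jfrac (k + n) x = Jfrac (k + n) x'
  | 0, n, x, x', _, h => by simpa using h
  | k + 1, n, x, x', hx, h => by
    rw [show k + 1 + n = k + n + 1 by omega]
    simp only [Jfrac, hx 1 le_rfl (by omega), hx 2 (by omega) (by omega)]
    congr 3
    refine Jfrac_add_congr k (fun j _ _ => hx (j + 2) (by omega) (by omega)) ?_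
    simpa only [add_assoc, ← mul_add_one] using h

theorem Jfrac_succ_eq_of_eq_one_add_mul (n : ℕ) {x x' : ℕ → K} (p : K)
    (h1 : x' 1 = x 1 + x 2) (h2 : x' 2 = x 2 * p)
    (h : Jfrac n (fun j => x (j + 2)) = 1 + p * Jfrac n (fun j => x' (j + 2))) :
    Jfrac (n + 1) x = Jfrac (n + 1) x' := by
  simp only [Jfrac, h, h1, h2]
  ring_nf

theorem one_div_div_eq_one_add_mul {t s d N E : K} (hs : s ≠ 0) (hN : N ≠ 0)
    (hd : d = N + t * E) : 1 / (N / d) = 1 + t * s * (1 / (s * N / E)) := by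
  rw [one_div_div, one_div_div, hd]
  field_simp

theorem one_div_eq_one_add_mul_one_div_of_case_i {t a b c d d' : K} (hab : a + b ≠ 0)
    (hd : d ≠ 0) (hd'_eq : d' = d + t * c * b / (a + b)) (hd' : d' ≠ 0)
    (hD : 1 - t * (a + b) - t * b * (t * c) * (1 / d) ≠ 0) :
    1 / (1 - t * (a + b) - t * b * (t * c) * (1 / d)) =
      1 + t * (a + b) * (1 / (1 - t * (a + b) - t * (c * b / (a + b)) * (1 / d'))) := by
  have hd'_eq' : d' = ((a + b) * d + t * b * c) / (a + b) := by rw [hd'_eq]; field_simp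
  have hE : (a + b) * d + t * b * c ≠ 0 := by simpa [hd'_eq', hab] using hd'
  have hD_eq : 1 - t * (a + b) - t * b * (t * c) * (1 / d) =
      ((1 - t * (a + b)) * d - t ^ 2 * b * c) / d := by field_simp
  have hD'_eq : 1 - t * (a + b) - t * (c * b / (a + b)) * (1 / d') =
      (a + b) * ((1 - t * (a + b)) * d - t ^ 2 * b * c) / ((a + b) * d + t * b * c) := by
    rw [hd'_eq']; field_simp; ring
  rw [hD_eq] at hD ⊢
  rw [hD'_eq]
  exact one_div_div_eq_one_add_mul hab (div_ne_zero_iff.mp hD).1 (by ring)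

theorem one_div_eq_one_add_mul_one_div_of_case_ii {t a b d d' : K} (ha : a ≠ 0)
    (hab : a + b ≠ 0) (hd : d ≠ 0) (hd'_eq : d' = 1 - a / (a + b) * (1 - d)) (hd' : d' ≠ 0)
    (hD : 1 - t * a - t * b * (1 / d) ≠ 0) :
    1 / (1 - t * a - t * b * (1 / d)) =
      1 + t * (a + b) * (1 / (1 - (t * (a + b) - b / a) - b / a * (1 / d'))) := by
  have hd'_eq' : d' = (b + a * d) / (a + b) := by rw [hd'_eq]; field_simp; ring
  have hE : b + a * d ≠ 0 := by simpa [hd'_eq', hab] using hd'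
  have hD_eq : 1 - t * a - t * b * (1 / d) = ((1 - t * a) * d - t * b) / d := by field_simp
  have hD'_eq : 1 - (t * (a + b) - b / a) - b / a * (1 / d') =
      (a + b) * ((1 - t * a) * d - t * b) / (b + a * d) := by
    rw [hd'_eq']; field_simp; ring
  rw [hD_eq] at hD ⊢
  rw [hD'_eq]
  exact one_div_div_eq_one_add_mul hab (div_ne_zero_iff.mp hD).1 (by ring)

-- `x` and `x'` stand for `ŷ(m)` and `ŷ(m')` shifted by `2i-2`, and `a, b, c` for
-- `y_{2i-1}, y_{2i}, y_{2i+1}`.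
theorem Jfrac_eq_one_add_mul_of_case_i (n : ℕ) {x x' : ℕ → K} {t a b c : K}
    (hab : a + b ≠ 0) (h1 : x 1 = t * (a + b)) (h2 : x 2 = t * b * (t * c))
    (h1' : x' 1 = t * (a + b)) (h2' : x' 2 = t * (c * b / (a + b)))
    (h3' : x' 3 = x 3 - t * c * b / (a + b)) (h4' : x' 4 = x 4)
    (htail : ∀ j, 5 ≤ j → x' j = x j) (hx : JfracGen (n + 2) x) (hx' : JfracGen (n + 2) x') :
    Jfrac (n + 2) x = 1 + t * (a + b) * Jfrac (n + 2) x' := by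
  have hW : Jfrac n (fun j => x' (j + 2 + 2)) = Jfrac n (fun j => x (j + 2 + 2)) :=
    Jfrac_congr n fun j _ _ => htail _ (by omega)
  obtain ⟨hD, hd, -⟩ := hx
  obtain ⟨-, hd', -⟩ := hx'
  simp only [Jfrac, hW] at hD hd hd' ⊢
  rw [h1, h2] at hD ⊢
  rw [h1', h2']
  exact one_div_eq_one_add_mul_one_div_of_case_i hab hd (by rw [h3', h4']; ring) hd' hD

theorem Jfrac_eq_one_add_mul_of_case_ii (n : ℕ) {x x' : ℕ → K} {t a b : K} (ha : a ≠ 0)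
    (hab : a + b ≠ 0) (h1 : x 1 = t * a) (h2 : x 2 = t * b)
    (h1' : x' 1 = t * (a + b) - b / a) (h2' : x' 2 = b / a)
    (h3' : x' 3 = a / (a + b) * x 3) (h4' : x' 4 = a / (a + b) * x 4)
    (htail : ∀ j, 5 ≤ j → x' j = x j) (hx : JfracGen (n + 2) x) (hx' : JfracGen (n + 2) x') :
    Jfrac (n + 2) x = 1 + t * (a + b) * Jfrac (n + 2) x' := by
  have hW : Jfrac n (fun j => x' (j + 2 + 2)) = Jfrac n (fun j => x (j + 2 + 2)) :=
    Jfrac_congr n fun j _ _ => htail _ (by omega)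
  obtain ⟨hD, hd, -⟩ := hx
  obtain ⟨-, hd', -⟩ := hx'
  simp only [Jfrac, hW] at hD hd hd' ⊢
  rw [h1, h2] at hD ⊢
  rw [h1', h2']
  exact one_div_eq_one_add_mul_one_div_of_case_ii ha hab hd (by rw [h3', h4']; ring) hd' hD

def mutatePath (m : ℕ → ℤ) (i : ℕ) : ℕ → ℤ := fun j => if j = i then m i + 1 else m j

def mutateWeights (y : ℕ → K) (m : ℕ → ℤ) (i : ℕ) : ℕ → K := fun j =>
  if j = 2 * i - 1 then y (2 * i - 1) + y (2 * i)
  else if j = 2 * i then y (2 * i + 1) * y (2 * i) / (y (2 * i - 1) + y (2 * i))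
  else if j = 2 * i + 1 then y (2 * i + 1) * y (2 * i - 1) / (y (2 * i - 1) + y (2 * i))
  else if j = 2 * i + 2 ∧ m (i + 1) = m i then
    y (2 * i + 2) * y (2 * i - 1) / (y (2 * i - 1) + y (2 * i))
  else y j

section mutate

variable (y : ℕ → K) (m : ℕ → ℤ) {i j : ℕ}

theorem mutatePath_self : mutatePath m i i = m i + 1 := if_pos rfl

theorem mutatePath_of_ne (h : j ≠ i) : mutatePath m i j = m j := if_neg h

theorem mutateWeights_of_lt (h : j < 2 * i - 1) : mutateWeights y m i j = y j := by
  simp only [mutateWeights]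
  split_ifs <;> first | rfl | omega

theorem mutateWeights_of_gt (h : 2 * i + 2 < j) : mutateWeights y m i j = y j := by
  simp only [mutateWeights]
  split_ifs <;> first | rfl | omega

theorem mutateWeights_two_mul_sub_one :
    mutateWeights y m i (2 * i - 1) = y (2 * i - 1) + y (2 * i) := if_pos rfl

theorem mutateWeights_two_mul (hi : 1 ≤ i) :
    mutateWeights y m i (2 * i) = y (2 * i + 1) * y (2 * i) / (y (2 * i - 1) + y (2 * i)) := by
  simp only [mutateWeights]
  split_ifs <;> first | rfl | omega

theorem mutateWeights_two_mul_add_one :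
    mutateWeights y m i (2 * i + 1) =
      y (2 * i + 1) * y (2 * i - 1) / (y (2 * i - 1) + y (2 * i)) := by
  simp only [mutateWeights]
  split_ifs <;> first | rfl | omega

theorem mutateWeights_two_mul_add_two_of_eq (h : m (i + 1) = m i) :
    mutateWeights y m i (2 * i + 2) =
      y (2 * i + 2) * y (2 * i - 1) / (y (2 * i - 1) + y (2 * i)) := by
  simp only [mutateWeights]
  split_ifs <;> first | rfl | omega | simp_all

theorem mutateWeights_two_mul_add_two_of_ne (h : m (i + 1) ≠ m i) :
    mutateWeights y m i (2 * i + 2) = y (2 * i + 2) := by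
  simp only [mutateWeights]
  split_ifs <;> first | rfl | omega

end mutate

section yhat

variable {r j u : ℕ} {t : K} {y y' : ℕ → K} {m m' : ℕ → ℤ}

theorem yhat_odd_of_eq (hj : j + 1 = 2 * u) (hu : u + 1 ≤ r) (h : m (u + 1) = m u) :
    yhat r t y m j = t * y j := by
  simp only [yhat, show j % 2 = 1 by omega, show (j + 1) / 2 = u by omega, hu, h, if_true,
    show m u ≠ m u - 1 by omega, show m u ≠ m u + 1 by omega, if_false]

theorem yhat_odd_of_eq_add_one (hj : j + 1 = 2 * u) (hu : u + 1 ≤ r)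
    (h : m (u + 1) = m u + 1) : yhat r t y m j = t * (y j + y (2 * u)) := by
  simp only [yhat, show j % 2 = 1 by omega, hj, Nat.mul_div_cancel_left u two_pos, hu, h,
    if_true, show m u + 1 ≠ m u - 1 by omega, if_false]

theorem yhat_odd_of_eq_sub_one (hj : j + 1 = 2 * u) (hu : u + 1 ≤ r)
    (h : m (u + 1) = m u - 1) : yhat r t y m j = t * y j - y (2 * u) / y (2 * u + 1) := by
  simp only [yhat, show j % 2 = 1 by omega, hj, Nat.mul_div_cancel_left u two_pos, hu, h,
    if_true, show j + 2 = 2 * u + 1 by omega]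

theorem yhat_even (hj : j = 2 * u) (hu : u + 1 ≤ r) :
    yhat r t y m j = t * y (2 * u) * (t * y (2 * u + 1)) ^ (m (u + 1) - m u) := by
  subst hj
  simp [yhat, hu]

theorem yhat_congr (hy : ∀ k, j ≤ k → k ≤ j + 2 → y' k = y k)
    (hm : ∀ k, j / 2 ≤ k → k ≤ (j + 1) / 2 + 1 → m' k = m k) :
    yhat r t y' m' j = yhat r t y m j := by
  simp only [yhat, hy j le_rfl (by omega), hy (j + 1) (by omega) (by omega),
    hy (j + 2) (by omega) le_rfl, hm (j / 2) le_rfl (by omega),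
    hm (j / 2 + 1) (by omega) (by omega), hm ((j + 1) / 2) (by omega) (by omega),
    hm ((j + 1) / 2 + 1) (by omega) le_rfl]

theorem yhat_odd_affine (hj : j % 2 = 1) (s δ : K) (h0 : y' j = s * y j + δ)
    (h1 : y' (j + 1) = s * y (j + 1)) (h2 : y' (j + 2) = y (j + 2))
    (hm0 : m' ((j + 1) / 2) = m ((j + 1) / 2))
    (hm1 : m' ((j + 1) / 2 + 1) = m ((j + 1) / 2 + 1)) :
    yhat r t y' m' j = s * yhat r t y m j + t * δ := by
  simp only [yhat, hj, h0, h1, h2, hm0, hm1]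
  split_ifs <;> ring

theorem yhat_even_smul (hj : j % 2 = 0) (s : K) (h0 : y' j = s * y j)
    (h1 : y' (j + 1) = y (j + 1)) (hm0 : m' (j / 2) = m (j / 2))
    (hm1 : m' (j / 2 + 1) = m (j / 2 + 1)) :
    yhat r t y' m' j = s * yhat r t y m j := by
  simp only [yhat, show ¬j % 2 = 1 by omega, if_false, h0, h1, hm0, hm1]
  split_ifs <;> ring

end yhat

section mutation

variable (r : ℕ) (t : K) (y : ℕ → K) (m : ℕ → ℤ) {i n : ℕ}

local notation "ŷ" => yhat r t y m
local notation "ŷ'" => yhat r t (mutateWeights y m i) (mutatePath m i)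

theorem yhat_mutate_of_lt {j : ℕ} (hj : 2 * i + 2 < j) : ŷ' j = ŷ j :=
  yhat_congr (fun _ _ _ => mutateWeights_of_gt y m (by omega))
    (fun _ _ _ => mutatePath_of_ne m (by omega))

theorem yhat_mutate_of_le {j : ℕ} (hj1 : 1 ≤ j) (hj : j ≤ 2 * (i - 2)) : ŷ' j = ŷ j :=
  yhat_congr (fun _ _ _ => mutateWeights_of_lt y m (by omega))
    (fun _ _ _ => mutatePath_of_ne m (by omega))

theorem Jfrac_yhat_mutate_block_of_eq_add_one (hi : 1 ≤ i) (hn : i + 1 + n = r)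
    (hup : m (i + 1) = m i + 1) (hab : y (2 * i - 1) + y (2 * i) ≠ 0)
    (hg : JfracGen (n + 2) fun j => ŷ (j + 2 * (i - 1)))
    (hg' : JfracGen (n + 2) fun j => ŷ' (j + 2 * (i - 1))) :
    Jfrac (n + 2) (fun j => ŷ (j + 2 * (i - 1))) =
      1 + t * (y (2 * i - 1) + y (2 * i)) * Jfrac (n + 2) (fun j => ŷ' (j + 2 * (i - 1))) := by
  have hm' : mutatePath m i (i + 1) = mutatePath m i i := by
    rw [mutatePath_self, mutatePath_of_ne m (by omega), hup]
  refine Jfrac_eq_one_add_mul_of_case_i n (c := y (2 * i + 1)) hab ?_ ?_ ?_ ?_ ?_ ?_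
    (fun j _ => yhat_mutate_of_lt r t y m (by omega)) hg hg'
  · rw [show 1 + 2 * (i - 1) = 2 * i - 1 by omega]
    exact yhat_odd_of_eq_add_one (by omega) (by omega) hup
  · rw [yhat_even (u := i) (by omega) (by omega), hup, add_sub_cancel_left, zpow_one]
  · rw [show 1 + 2 * (i - 1) = 2 * i - 1 by omega,
      yhat_odd_of_eq (u := i) (by omega) (by omega) hm', mutateWeights_two_mul_sub_one]
  · rw [yhat_even (u := i) (by omega) (by omega), hm', sub_self, zpow_zero, mul_one,
      mutateWeights_two_mul y m hi]
  · rw [show 3 + 2 * (i - 1) = 2 * i + 1 by omega,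
      yhat_odd_affine (by omega) 1
        (y (2 * i + 1) * y (2 * i - 1) / (y (2 * i - 1) + y (2 * i)) - y (2 * i + 1))
        (by rw [mutateWeights_two_mul_add_one]; ring)
        (by rw [mutateWeights_two_mul_add_two_of_ne y m (by omega), one_mul])
        (mutateWeights_of_gt y m (by omega)) (mutatePath_of_ne m (by omega))
        (mutatePath_of_ne m (by omega))]
    field_simp
    ring
  · rw [show 4 + 2 * (i - 1) = 2 * i + 2 by omega]
    simpa using yhat_even_smul (r := r) (t := t) (by omega) 1
      (by rw [mutateWeights_two_mul_add_two_of_ne y m (by omega), one_mul])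
      (mutateWeights_of_gt y m (by omega)) (mutatePath_of_ne m (by omega))
      (mutatePath_of_ne m (by omega))

theorem Jfrac_yhat_mutate_block_of_eq (hi : 1 ≤ i) (hn : i + 1 + n = r)
    (hflat : m (i + 1) = m i) (ht : t ≠ 0) (ha : y (2 * i - 1) ≠ 0)
    (hab : y (2 * i - 1) + y (2 * i) ≠ 0) (hc : y (2 * i + 1) ≠ 0)
    (hg : JfracGen (n + 2) fun j => ŷ (j + 2 * (i - 1)))
    (hg' : JfracGen (n + 2) fun j => ŷ' (j + 2 * (i - 1))) :
    Jfrac (n + 2) (fun j => ŷ (j + 2 * (i - 1))) =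
      1 + t * (y (2 * i - 1) + y (2 * i)) * Jfrac (n + 2) (fun j => ŷ' (j + 2 * (i - 1))) := by
  have hm' : mutatePath m i (i + 1) = mutatePath m i i - 1 := by
    rw [mutatePath_self, mutatePath_of_ne m (by omega), hflat, add_sub_cancel_right]
  refine Jfrac_eq_one_add_mul_of_case_ii n ha hab ?_ ?_ ?_ ?_ ?_ ?_
    (fun j _ => yhat_mutate_of_lt r t y m (by omega)) hg hg'
  · rw [show 1 + 2 * (i - 1) = 2 * i - 1 by omega]
    exact yhat_odd_of_eq (by omega) (by omega) hflat
  · rw [yhat_even (u := i) (by omega) (by omega), hflat, sub_self, zpow_zero, mul_one]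
  · rw [show 1 + 2 * (i - 1) = 2 * i - 1 by omega,
      yhat_odd_of_eq_sub_one (u := i) (by omega) (by omega) hm', mutateWeights_two_mul_sub_one,
      mutateWeights_two_mul y m hi, mutateWeights_two_mul_add_one]
    field_simp
  · rw [yhat_even (u := i) (by omega) (by omega), hm', sub_sub_cancel_left, zpow_neg_one,
      mutateWeights_two_mul y m hi, mutateWeights_two_mul_add_one]
    field_simp
  · rw [show 3 + 2 * (i - 1) = 2 * i + 1 by omega]
    simpa using yhat_odd_affine (r := r) (t := t) (by omega)
      (y (2 * i - 1) / (y (2 * i - 1) + y (2 * i))) 0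
      (by rw [mutateWeights_two_mul_add_one]; ring)
      (by rw [mutateWeights_two_mul_add_two_of_eq y m hflat]; ring)
      (mutateWeights_of_gt y m (by omega)) (mutatePath_of_ne m (by omega))
      (mutatePath_of_ne m (by omega))
  · rw [show 4 + 2 * (i - 1) = 2 * i + 2 by omega]
    exact yhat_even_smul (by omega) _
      (by rw [mutateWeights_two_mul_add_two_of_eq y m hflat]; ring)
      (mutateWeights_of_gt y m (by omega)) (mutatePath_of_ne m (by omega))
      (mutatePath_of_ne m (by omega))

theorem Jfrac_yhat_mutate_block (hi : 1 ≤ i) (hn : i + 1 + n = r)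
    (hcase : m (i + 1) = m i + 1 ∨ m (i + 1) = m i) (ht : t ≠ 0) (ha : y (2 * i - 1) ≠ 0)
    (hab : y (2 * i - 1) + y (2 * i) ≠ 0) (hc : y (2 * i + 1) ≠ 0)
    (hg : JfracGen r ŷ) (hg' : JfracGen r ŷ') :
    Jfrac (n + 2) (fun j => ŷ (j + 2 * (i - 1))) =
      1 + t * (y (2 * i - 1) + y (2 * i)) * Jfrac (n + 2) (fun j => ŷ' (j + 2 * (i - 1))) := by
  have hr : i - 1 + (n + 2) = r := by omega
  have hgs := JfracGen.shift (i - 1) (n := n + 2) (by rw [hr]; exact hg)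
  have hgs' := JfracGen.shift (i - 1) (n := n + 2) (by rw [hr]; exact hg')
  rcases hcase with hup | hflat
  · exact Jfrac_yhat_mutate_block_of_eq_add_one r t y m hi hn hup hab hgs hgs'
  · exact Jfrac_yhat_mutate_block_of_eq r t y m hi hn hflat ht ha hab hc hgs hgs'

theorem Jfrac_yhat_mutate_of_two_le (hi : 2 ≤ i) (hn : i + 1 + n = r) (hprev : m (i - 1) = m i)
    (hblock : Jfrac (n + 2) (fun j => ŷ (j + 2 * (i - 1))) =
      1 + t * (y (2 * i - 1) + y (2 * i)) * Jfrac (n + 2) (fun j => ŷ' (j + 2 * (i - 1)))) :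
    Jfrac r ŷ = Jfrac r ŷ' := by
  have hm : m (i - 1 + 1) = m (i - 1) := by rw [Nat.sub_add_cancel (by omega), hprev]
  have hm' : mutatePath m i (i - 1 + 1) = mutatePath m i (i - 1) + 1 := by
    rw [Nat.sub_add_cancel (by omega), mutatePath_self, mutatePath_of_ne m (by omega), hprev]
  have hy' : ∀ j, j < 2 * i - 1 → mutateWeights y m i j = y j := fun j hj =>
    mutateWeights_of_lt y m hj
  have key : Jfrac (i - 2 + (n + 3)) ŷ = Jfrac (i - 2 + (n + 3)) ŷ' := by
    refine Jfrac_add_congr (i - 2) (fun j hj1 hj2 => (yhat_mutate_of_le r t y m hj1 hj2).symm) ?_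
    refine Jfrac_succ_eq_of_eq_one_add_mul (n + 2) (t * (y (2 * i - 1) + y (2 * i))) ?_ ?_ ?_
    · rw [yhat_odd_of_eq_add_one (u := i - 1) (by omega) (by omega) hm',
        yhat_odd_of_eq (u := i - 1) (by omega) (by omega) hm,
        yhat_even (u := i - 1) (by omega) (by omega), hm, sub_self, zpow_zero, mul_one,
        hy' _ (by omega), hy' _ (by omega)]
      ring
    · rw [yhat_even (u := i - 1) (by omega) (by omega),
        yhat_even (u := i - 1) (by omega) (by omega), hm, hm', sub_self, add_sub_cancel_left,
        zpow_zero, zpow_one, mul_one, hy' _ (by omega),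
        show 2 * (i - 1) + 1 = 2 * i - 1 by omega, mutateWeights_two_mul_sub_one]
    · simpa only [show ∀ j, j + 2 + 2 * (i - 2) = j + 2 * (i - 1) from fun j => by omega]
        using hblock
  rwa [show i - 2 + (n + 3) = r by omega] at key

end mutation

end

theorem stmt6_general {K : Type*} [Field K] (r : ℕ) (t : K) (y : ℕ → K)
    (m : ℕ → ℤ)
    (i : ℕ) (hi1 : 1 ≤ i) (hi2 : i ≤ r - 1)
    (hcase : (m (i + 1) = m i + 1 ∨ m (i + 1) = m i) ∧ (2 ≤ i → m (i - 1) = m i))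
    (m' : ℕ → ℤ) (hm' : m' = fun j => if j = i then m i + 1 else m j)
    (y' : ℕ → K)
    (hy' : y' = fun j =>
      if j = 2 * i - 1 then y (2 * i - 1) + y (2 * i)
      else if j = 2 * i then y (2 * i + 1) * y (2 * i) / (y (2 * i - 1) + y (2 * i))
      else if j = 2 * i + 1 then y (2 * i + 1) * y (2 * i - 1) / (y (2 * i - 1) + y (2 * i))
      else if j = 2 * i + 2 ∧ m (i + 1) = m i then
        y (2 * i + 2) * y (2 * i - 1) / (y (2 * i - 1) + y (2 * i))
      else y j)
    -- genericity: every element inverted in forming ŷ(m), ŷ(m'), y' is nonzero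
    (hgen1 : ∀ j, 1 ≤ j → j ≤ r - 1 → y (2 * j + 1) ≠ 0 ∧ t * y (2 * j + 1) ≠ 0)
    (hgen1' : ∀ j, 1 ≤ j → j ≤ r - 1 → y' (2 * j + 1) ≠ 0 ∧ t * y' (2 * j + 1) ≠ 0)
    (hgen2 : y (2 * i - 1) + y (2 * i) ≠ 0)
    -- genericity: every denominator in the recursive evaluation of the fractions is nonzero
    (hgen3 : JfracGen r (yhat r t y m))
    (hgen4 : JfracGen r (yhat r t y' m')) :
    (2 ≤ i → Jfrac r (yhat r t y m) = Jfrac r (yhat r t y' m')) ∧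
    (i = 1 → Jfrac r (yhat r t y m) = 1 + t * y' 1 * Jfrac r (yhat r t y' m')) ∧
    (2 ≤ i → 1 + t * y 1 * Jfrac r (yhat r t y m) = 1 + t * y' 1 * Jfrac r (yhat r t y' m')) ∧
    (i = 1 → 1 + t * y 1 * Jfrac r (yhat r t y m) =
      1 + t * y 1 * (1 + t * y' 1 * Jfrac r (yhat r t y' m'))) := by
  obtain rfl : m' = mutatePath m i := hm'
  obtain rfl : y' = mutateWeights y m i := hy'
  have ht : t ≠ 0 := left_ne_zero_of_mul (hgen1 i hi1 hi2).2
  have ha : y (2 * i - 1) ≠ 0 := by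
    have h := (hgen1' i hi1 hi2).1
    rw [mutateWeights_two_mul_add_one] at h
    exact right_ne_zero_of_mul (div_ne_zero_iff.mp h).1
  have hblock := Jfrac_yhat_mutate_block r t y m hi1 (n := r - i - 1) (by omega) hcase.1 ht ha
    hgen2 (hgen1 i hi1 hi2).1 hgen3 hgen4
  have hge2 : 2 ≤ i → Jfrac r (yhat r t y m) =
      Jfrac r (yhat r t (mutateWeights y m i) (mutatePath m i)) := fun hi =>
    Jfrac_yhat_mutate_of_two_le r t y m hi (by omega) (hcase.2 hi) hblock
  have heq1 : i = 1 → Jfrac r (yhat r t y m) = 1 + t * mutateWeights y m i 1 *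
      Jfrac r (yhat r t (mutateWeights y m i) (mutatePath m i)) := by
    rintro rfl
    rw [show r - 1 - 1 + 2 = r by omega] at hblock
    exact hblock
  refine ⟨hge2, heq1, fun hi => ?_, fun hi => by rw [heq1 hi]⟩
  rw [hge2 hi, mutateWeights_of_lt y m (by omega : 1 < 2 * i - 1)]

/-- Theorem 2.7 of Di Francesco–Kedem: invariance of the Jacobi continued fraction
`J^{(r)}(ŷ(m))` (and of `F_m(t) = 1 + t·y₁·J^{(r)}(ŷ(m))`) under mutations of the
Motzkin path `m` and the corresponding mutation of the weights `y`, in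
case (i) (`m_{i+1} = m_i + 1`) and case (ii) (`m_{i+1} = m_i`),
with `m_{i-1} = m_i` when `i ≥ 2`. -/
theorem stmt6 {K : Type*} [Field K] (r : ℕ) (hr : 2 ≤ r) (t : K) (y : ℕ → K)
    (m : ℕ → ℤ) (hm : ∀ j, 1 ≤ j → j ≤ r - 1 → |m (j + 1) - m j| ≤ 1)
    (i : ℕ) (hi1 : 1 ≤ i) (hi2 : i ≤ r - 1)
    (hcase : (m (i + 1) = m i + 1 ∨ m (i + 1) = m i) ∧ (2 ≤ i → m (i - 1) = m i))
    (m' : ℕ → ℤ) (hm' : m' = fun j => if j = i then m i + 1 else m j)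
    (y' : ℕ → K)
    (hy' : y' = fun j =>
      if j = 2 * i - 1 then y (2 * i - 1) + y (2 * i)
      else if j = 2 * i then y (2 * i + 1) * y (2 * i) / (y (2 * i - 1) + y (2 * i))
      else if j = 2 * i + 1 then y (2 * i + 1) * y (2 * i - 1) / (y (2 * i - 1) + y (2 * i))
      else if j = 2 * i + 2 ∧ m (i + 1) = m i then
        y (2 * i + 2) * y (2 * i - 1) / (y (2 * i - 1) + y (2 * i))
      else y j)
    -- genericity: every element inverted in forming ŷ(m), ŷ(m'), y' is nonzero
    (hgen1 : ∀ j, 1 ≤ j → j ≤ r - 1 → y (2 * j + 1) ≠ 0 ∧ t * y (2 * j + 1) ≠ 0)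
    (hgen1' : ∀ j, 1 ≤ j → j ≤ r - 1 → y' (2 * j + 1) ≠ 0 ∧ t * y' (2 * j + 1) ≠ 0)
    (hgen2 : y (2 * i - 1) + y (2 * i) ≠ 0)
    -- genericity: every denominator in the recursive evaluation of the fractions is nonzero
    (hgen3 : JfracGen r (yhat r t y m))
    (hgen4 : JfracGen r (yhat r t y' m')) :
    (2 ≤ i → Jfrac r (yhat r t y m) = Jfrac r (yhat r t y' m')) ∧
    (i = 1 → Jfrac r (yhat r t y m) = 1 + t * y' 1 * Jfrac r (yhat r t y' m')) ∧
    (2 ≤ i → 1 + t * y 1 * Jfrac r (yhat r t y m) = 1 + t * y' 1 * Jfrac r (yhat r t y' m')) ∧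
    (i = 1 → 1 + t * y 1 * Jfrac r (yhat r t y m) =
      1 + t * y 1 * (1 + t * y' 1 * Jfrac r (yhat r t y' m'))) :=
  stmt6_general r t y m i hi1 hi2 hcase m' hm' y' hy' hgen1 hgen1' hgen2 hgen3 hgen4
end

section
/- Let K be a field, r ≥ 2, and let R_{i,k} ∈ K for 0 ≤ i ≤ r+1 and k ∈ ℤ be nonzero elements with R_{0,k} = R_{r+1,k} = 1 satisfying the A_r Q-system R_{i,k+1}·R_{i,k−1} = R_{i,k}² + R_{i+1,k}·R_{i−1,k} for 1 ≤ i ≤ r and k ∈ ℤ. For a Motzkin path m define the explicit weights y_j(m) as in the context. Then for every mutation site 1 ≤ i ≤ r−1 satisfying case (i) (m_{i+1} = m_i + 1 and, when i ≥ 2, m_{i−1} = m_i) or case (ii) (m_{i+1} = m_i and, when i ≥ 2, m_{i−1} = m_i), and m' the Motzkin path with m'_j = m_j + δ_{j,i}, the explicit weights satisfy the mutation relations: y_{2i−1}(m') = y_{2i−1}(m) + y_{2i}(m); y_{2i}(m') = y_{2i+1}(m)·y_{2i}(m)/(y_{2i−1}(m) + y_{2i}(m)); y_{2i+1}(m') =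 y_{2i+1}(m)·y_{2i−1}(m)/(y_{2i−1}(m) + y_{2i}(m)); in case (ii) additionally y_{2i+2}(m') = y_{2i+2}(m)·y_{2i−1}(m)/(y_{2i−1}(m) + y_{2i}(m)); and y_j(m') = y_j(m) for all other indices j ∈ {1,…,2r+1}. -/
/-!
Divided by `R_{i,k} R_{i,k-1}`, the `Q`-system relation reads
`c_{i,k+1} = c_{i,k} + d_{i,k} c_{i-1,k}`.
At a mutation site all correction factors `L` of `y_{2i}(m)` are trivial, so the three weights
around the site are `c_{i,m_i+1}/c_{i-1,m_i+1}`, `d_{i,m_i+1}` and `c_{i+1,m_{i+1}+1}/c_{i,m_i+1}`,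
and the relation gives `y_{2i-1} + y_{2i} = c_{i,m_i+2}/c_{i-1,m_i+1} = y_{2i-1}(m')`. Raising `m_i`
shifts `d_{i,·}` by one step, which is a ratio of `c`'s, and in case (ii) switches on the factors
`L_{i,i+1}` and `L_{i+1,i}`; together these give the remaining relations. Every other weight only
sees `m` where it is unchanged, or through factors `L` that stay trivial on both sides.
-/

namespace Stmt7

variable {K : Type*} [Field K]

/-- `c_{i,s} = R_{i,s}/R_{i,s-1}`. -/
def cQ (R : ℕ → ℤ → K) (i : ℕ) (s : ℤ) : K := R i s / R i (s - 1)

/-- `d_{i,s} = R_{i+1,s}·R_{i-1,s-1}/(R_{i,s}·R_{i,s-1})`. -/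
def dQ (R : ℕ → ℤ → K) (i : ℕ) (s : ℤ) : K :=
  R (i + 1) s * R (i - 1) (s - 1) / (R i s * R i (s - 1))

/-- `L_{i,i+1}`: equal to `c_{i+1,m_{i+1}+1}/c_{i+1,m_i+1}` if `1 ≤ i+1 ≤ r` and
`m_i = m_{i+1} + 1`, and `1` otherwise. -/
def Lup (r : ℕ) (R : ℕ → ℤ → K) (m : ℕ → ℤ) (i : ℕ) : K :=
  if i + 1 ≤ r ∧ m i = m (i + 1) + 1 then
    cQ R (i + 1) (m (i + 1) + 1) / cQ R (i + 1) (m i + 1)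
  else 1

/-- `L_{i,i-1}`: equal to `c_{i-1,m_{i-1}+1}/c_{i-1,m_i+1}` if `1 ≤ i-1 ≤ r` and
`m_i = m_{i-1} - 1`, and `1` otherwise. -/
def Ldown (r : ℕ) (R : ℕ → ℤ → K) (m : ℕ → ℤ) (i : ℕ) : K :=
  if 2 ≤ i ∧ i - 1 ≤ r ∧ m i = m (i - 1) - 1 then
    cQ R (i - 1) (m (i - 1) + 1) / cQ R (i - 1) (m i + 1)
  else 1

/-- The explicit weights `y_j(m)` of Theorem 2.11:
`y_{2i-1}(m) = c_{i,m_i+1}/c_{i-1,m_{i-1}+1}` and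
`y_{2i}(m) = d_{i,m_i+1}·L_{i,i+1}·(L_{i,i-1})⁻¹`. -/
def yQ (r : ℕ) (R : ℕ → ℤ → K) (m : ℕ → ℤ) (j : ℕ) : K :=
  if j % 2 = 1 then
    cQ R ((j + 1) / 2) (m ((j + 1) / 2) + 1) /
      cQ R ((j + 1) / 2 - 1) (m ((j + 1) / 2 - 1) + 1)
  else
    dQ R (j / 2) (m (j / 2) + 1) * Lup r R m (j / 2) * (Ldown r R m (j / 2))⁻¹

section QSystem

variable (R : ℕ → ℤ → K)

theorem cQ_ne_zero {r : ℕ} (hR : ∀ i k, i ≤ r + 1 → R i k ≠ 0) {i : ℕ}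
    (hi : i ≤ r + 1) (s : ℤ) : cQ R i s ≠ 0 :=
  div_ne_zero (hR i s hi) (hR i (s - 1) hi)

theorem cQ_of_forall_eq_one {i : ℕ} (h : ∀ k, R i k = 1) (s : ℤ) : cQ R i s = 1 := by
  simp [cQ, h]

theorem cQ_add_one {i : ℕ} {k : ℤ} (h₀ : R i k ≠ 0) (h₁ : R i (k - 1) ≠ 0)
    (h₂ : R (i - 1) (k - 1) ≠ 0)
    (hQ : R i (k + 1) * R i (k - 1) = R i k ^ 2 + R (i + 1) k * R (i - 1) k) :
    cQ R i (k + 1) = cQ R i k + dQ R i k * cQ R (i - 1) k := by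
  unfold cQ dQ
  rw [add_sub_cancel_right]
  field_simp
  linear_combination hQ

theorem dQ_add_one {i : ℕ} {k : ℤ} (h₀ : R i k ≠ 0) (h₁ : R i (k - 1) ≠ 0)
    (h₂ : R i (k + 1) ≠ 0) (h₃ : R (i - 1) (k - 1) ≠ 0) (h₄ : R (i + 1) k ≠ 0) :
    dQ R i (k + 1) =
      cQ R (i + 1) (k + 1) * dQ R i k * cQ R (i - 1) k / (cQ R i k * cQ R i (k + 1)) := by
  unfold cQ dQ
  rw [add_sub_cancel_right]
  field_simp

end QSystem

section Weights

variable (r : ℕ) (R : ℕ → ℤ → K) (m : ℕ → ℤ)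

theorem yQ_two_mul_sub_one {i : ℕ} (hi : 1 ≤ i) :
    yQ r R m (2 * i - 1) = cQ R i (m i + 1) / cQ R (i - 1) (m (i - 1) + 1) := by
  rw [yQ, if_pos (by omega), show (2 * i - 1 + 1) / 2 = i by omega]

theorem yQ_two_mul_add_one (i : ℕ) :
    yQ r R m (2 * i + 1) = cQ R (i + 1) (m (i + 1) + 1) / cQ R i (m i + 1) := by
  rw [show 2 * i + 1 = 2 * (i + 1) - 1 by omega, yQ_two_mul_sub_one r R m (by omega),
    Nat.add_sub_cancel]

theorem yQ_two_mul (i : ℕ) :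
    yQ r R m (2 * i) = dQ R i (m i + 1) * Lup r R m i * (Ldown r R m i)⁻¹ := by
  rw [yQ, if_neg (by omega), show 2 * i / 2 = i by omega]

theorem Lup_of_le {i : ℕ} (h : m i ≤ m (i + 1)) : Lup r R m i = 1 :=
  if_neg fun h' => by omega

theorem Ldown_of_le {i : ℕ} (h : 2 ≤ i → m (i - 1) ≤ m i) : Ldown r R m i = 1 :=
  if_neg fun h' => by have := h h'.1; omega

variable {m} {m' : ℕ → ℤ}

theorem Lup_congr {i : ℕ} (h₀ : m' i = m i) (h₁ : m' (i + 1) = m (i + 1)) :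
    Lup r R m' i = Lup r R m i := by
  rw [Lup, Lup, h₀, h₁]

theorem Ldown_congr {i : ℕ} (h₀ : m' i = m i) (h₁ : m' (i - 1) = m (i - 1)) :
    Ldown r R m' i = Ldown r R m i := by
  rw [Ldown, Ldown, h₀, h₁]

theorem yQ_two_mul_add_one_congr {i : ℕ} (h₀ : m' i = m i) (h₁ : m' (i + 1) = m (i + 1)) :
    yQ r R m' (2 * i + 1) = yQ r R m (2 * i + 1) := by
  rw [yQ_two_mul_add_one, yQ_two_mul_add_one, h₀, h₁]

end Weights

def mutate (m : ℕ → ℤ) (i : ℕ) : ℕ → ℤ := Function.update m i (m i + 1)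

theorem mutate_self (m : ℕ → ℤ) (i : ℕ) : mutate m i i = m i + 1 :=
  Function.update_self i _ m

theorem mutate_of_ne {m : ℕ → ℤ} {i j : ℕ} (h : j ≠ i) : mutate m i j = m j :=
  Function.update_of_ne h _ m

/-- The sites `i` of cases (i) and (ii) of the mutation `μ_i`. -/
structure IsMutationSite (r : ℕ) (m : ℕ → ℤ) (i : ℕ) : Prop where
  one_le : 1 ≤ i
  lt : i < r
  next_eq : m (i + 1) = m i + 1 ∨ m (i + 1) = m i
  prev_eq : 2 ≤ i → m (i - 1) = m i

namespace IsMutationSite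

variable {r : ℕ} {R : ℕ → ℤ → K} {m : ℕ → ℤ} {i : ℕ}

theorem cQ_prev (hs : IsMutationSite r m i) (hR0 : ∀ k, R 0 k = 1) :
    cQ R (i - 1) (m (i - 1) + 1) = cQ R (i - 1) (m i + 1) := by
  rcases Nat.lt_or_ge i 2 with h | h
  · obtain rfl : i = 1 := by have := hs.one_le; omega
    simp only [cQ_of_forall_eq_one R hR0]
  · rw [hs.prev_eq h]

theorem yQ_two_mul_sub_one_eq (hs : IsMutationSite r m i) (hR0 : ∀ k, R 0 k = 1) :
    yQ r R m (2 * i - 1) = cQ R i (m i + 1) / cQ R (i - 1) (m i + 1) := by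
  rw [yQ_two_mul_sub_one r R m hs.one_le, hs.cQ_prev hR0]

theorem yQ_two_mul_eq (hs : IsMutationSite r m i) : yQ r R m (2 * i) = dQ R i (m i + 1) := by
  have hnext : m i ≤ m (i + 1) := by rcases hs.next_eq with h | h <;> omega
  rw [yQ_two_mul, Lup_of_le r R m hnext, Ldown_of_le r R m fun h => (hs.prev_eq h).le,
    mul_one, inv_one, mul_one]

theorem yQ_two_mul_sub_one_add_yQ_two_mul (hs : IsMutationSite r m i)
    (hR : ∀ j k, j ≤ r + 1 → R j k ≠ 0)
    (hR0 : ∀ k, R 0 k = 1)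
    (hQ : ∀ k, R i (k + 1) * R i (k - 1) = R i k ^ 2 + R (i + 1) k * R (i - 1) k) :
    yQ r R m (2 * i - 1) + yQ r R m (2 * i) =
      cQ R i (m i + 1 + 1) / cQ R (i - 1) (m i + 1) := by
  have := hs.one_le; have := hs.lt
  have hc : cQ R (i - 1) (m i + 1) ≠ 0 := cQ_ne_zero R hR (by omega) _
  rw [hs.yQ_two_mul_sub_one_eq hR0, hs.yQ_two_mul_eq,
    cQ_add_one R (k := m i + 1) (hR _ _ (by omega)) (hR _ _ (by omega)) (hR _ _ (by omega))
      (hQ _)]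
  field_simp

theorem yQ_mutate_two_mul_sub_one (hs : IsMutationSite r m i)
    (hR : ∀ j k, j ≤ r + 1 → R j k ≠ 0)
    (hR0 : ∀ k, R 0 k = 1)
    (hQ : ∀ k, R i (k + 1) * R i (k - 1) = R i k ^ 2 + R (i + 1) k * R (i - 1) k) :
    yQ r R (mutate m i) (2 * i - 1) = yQ r R m (2 * i - 1) + yQ r R m (2 * i) := by
  rw [hs.yQ_two_mul_sub_one_add_yQ_two_mul hR hR0 hQ, yQ_two_mul_sub_one r R _ hs.one_le,
    mutate_self, mutate_of_ne (by have := hs.one_le; omega), hs.cQ_prev hR0]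

theorem yQ_mutate_two_mul (hs : IsMutationSite r m i)
    (hR : ∀ j k, j ≤ r + 1 → R j k ≠ 0)
    (hR0 : ∀ k, R 0 k = 1)
    (hQ : ∀ k, R i (k + 1) * R i (k - 1) = R i k ^ 2 + R (i + 1) k * R (i - 1) k) :
    yQ r R (mutate m i) (2 * i) =
      yQ r R m (2 * i + 1) * yQ r R m (2 * i) /
        (yQ r R m (2 * i - 1) + yQ r R m (2 * i)) := by
  have := hs.one_le; have := hs.lt
  have hup : Lup r R (mutate m i) i =
      cQ R (i + 1) (m (i + 1) + 1) / cQ R (i + 1) (m i + 1 + 1) := by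
    rcases hs.next_eq with h | h
    · rw [Lup_of_le r R _ (by rw [mutate_self, mutate_of_ne (by omega), h]), h,
        div_self (cQ_ne_zero R hR (by omega) _)]
    · rw [Lup, if_pos ⟨by omega, by rw [mutate_self, mutate_of_ne (by omega), h]⟩, mutate_self,
        mutate_of_ne (by omega)]
  have hdown : Ldown r R (mutate m i) i = 1 := by
    refine Ldown_of_le r R _ fun h => ?_
    rw [mutate_self, mutate_of_ne (by omega), hs.prev_eq h]
    omega
  have h₁ : cQ R i (m i + 1) ≠ 0 := cQ_ne_zero R hR (by omega) _
  have h₂ : cQ R i (m i + 1 + 1) ≠ 0 := cQ_ne_zero R hR (by omega) _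
  have h₃ : cQ R (i - 1) (m i + 1) ≠ 0 := cQ_ne_zero R hR (by omega) _
  have h₄ : cQ R (i + 1) (m i + 1 + 1) ≠ 0 := cQ_ne_zero R hR (by omega) _
  rw [hs.yQ_two_mul_sub_one_add_yQ_two_mul hR hR0 hQ, yQ_two_mul_add_one, hs.yQ_two_mul_eq,
    yQ_two_mul, hup, hdown, mutate_self, dQ_add_one R (hR _ _ (by omega)) (hR _ _ (by omega))
      (hR _ _ (by omega)) (hR _ _ (by omega)) (hR _ _ (by omega))]
  field_simp

theorem yQ_mutate_two_mul_add_one (hs : IsMutationSite r m i)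
    (hR : ∀ j k, j ≤ r + 1 → R j k ≠ 0)
    (hR0 : ∀ k, R 0 k = 1)
    (hQ : ∀ k, R i (k + 1) * R i (k - 1) = R i k ^ 2 + R (i + 1) k * R (i - 1) k) :
    yQ r R (mutate m i) (2 * i + 1) =
      yQ r R m (2 * i + 1) * yQ r R m (2 * i - 1) /
        (yQ r R m (2 * i - 1) + yQ r R m (2 * i)) := by
  have := hs.one_le; have := hs.lt
  have h₁ : cQ R i (m i + 1) ≠ 0 := cQ_ne_zero R hR (by omega) _
  have h₂ : cQ R i (m i + 1 + 1) ≠ 0 := cQ_ne_zero R hR (by omega) _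
  have h₃ : cQ R (i - 1) (m i + 1) ≠ 0 := cQ_ne_zero R hR (by omega) _
  rw [hs.yQ_two_mul_sub_one_add_yQ_two_mul hR hR0 hQ, yQ_two_mul_add_one, yQ_two_mul_add_one,
    hs.yQ_two_mul_sub_one_eq hR0, mutate_self, mutate_of_ne (by omega)]
  field_simp

theorem yQ_mutate_two_mul_add_two (hs : IsMutationSite r m i)
    (hR : ∀ j k, j ≤ r + 1 → R j k ≠ 0)
    (hR0 : ∀ k, R 0 k = 1)
    (hQ : ∀ k, R i (k + 1) * R i (k - 1) = R i k ^ 2 + R (i + 1) k * R (i - 1) k)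
    (hflat : m (i + 1) = m i) :
    yQ r R (mutate m i) (2 * i + 2) =
      yQ r R m (2 * i + 2) * yQ r R m (2 * i - 1) /
        (yQ r R m (2 * i - 1) + yQ r R m (2 * i)) := by
  have := hs.one_le; have := hs.lt
  have hup : Lup r R (mutate m i) (i + 1) = Lup r R m (i + 1) :=
    Lup_congr r R (mutate_of_ne (by omega)) (mutate_of_ne (by omega))
  have hdown : Ldown r R (mutate m i) (i + 1) = cQ R i (m i + 1 + 1) / cQ R i (m i + 1) := by
    have hcond : 2 ≤ i + 1 ∧ i + 1 - 1 ≤ r ∧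
        mutate m i (i + 1) = mutate m i (i + 1 - 1) - 1 := by
      rw [Nat.add_sub_cancel, mutate_self, mutate_of_ne (by omega), hflat]
      exact ⟨by omega, by omega, by ring⟩
    rw [Ldown, if_pos hcond, Nat.add_sub_cancel, mutate_self, mutate_of_ne (by omega), hflat]
  have h₁ : cQ R i (m i + 1) ≠ 0 := cQ_ne_zero R hR (by omega) _
  have h₂ : cQ R i (m i + 1 + 1) ≠ 0 := cQ_ne_zero R hR (by omega) _
  have h₃ : cQ R (i - 1) (m i + 1) ≠ 0 := cQ_ne_zero R hR (by omega) _
  rw [hs.yQ_two_mul_sub_one_add_yQ_two_mul hR hR0 hQ, hs.yQ_two_mul_sub_one_eq hR0,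
    show 2 * i + 2 = 2 * (i + 1) by ring, yQ_two_mul, yQ_two_mul, hup, hdown,
    Ldown_of_le r R m (i := i + 1) fun _ => by rw [Nat.add_sub_cancel]; omega,
    mutate_of_ne (by omega)]
  field_simp

theorem yQ_mutate_of_ne (hs : IsMutationSite r m i) {j : ℕ} (hj : 1 ≤ j)
    (h₁ : j ≠ 2 * i - 1) (h₂ : j ≠ 2 * i) (h₃ : j ≠ 2 * i + 1)
    (h₄ : m (i + 1) = m i → j ≠ 2 * i + 2) :
    yQ r R (mutate m i) j = yQ r R m j := by
  have := hs.one_le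
  obtain ⟨k, rfl | rfl⟩ := Nat.even_or_odd' j
  · have hki : k ≠ i := by omega
    have hup : Lup r R (mutate m i) k = Lup r R m k := by
      by_cases hk : k + 1 = i
      · have hprev := hs.prev_eq (by omega)
        rw [show i - 1 = k by omega] at hprev
        rw [Lup_of_le r R m (by rw [hk]; omega),
          Lup_of_le r R _ (by rw [mutate_of_ne hki, hk, mutate_self]; omega)]
      · exact Lup_congr r R (mutate_of_ne hki) (mutate_of_ne hk)
    have hdown : Ldown r R (mutate m i) k = Ldown r R m k := by
      by_cases hk : k - 1 = i
      · have hnext : m (i + 1) = m i + 1 := hs.next_eq.resolve_right fun h => h₄ h (by omega)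
        obtain rfl : k = i + 1 := by omega
        rw [Ldown_of_le r R m fun _ => by rw [Nat.add_sub_cancel]; omega,
          Ldown_of_le r R _ fun _ => by
            rw [Nat.add_sub_cancel, mutate_self, mutate_of_ne (by omega)]; omega]
      · exact Ldown_congr r R (mutate_of_ne hki) (mutate_of_ne hk)
    rw [yQ_two_mul, yQ_two_mul, hup, hdown, mutate_of_ne hki]
  · exact yQ_two_mul_add_one_congr r R (mutate_of_ne (by omega)) (mutate_of_ne (by omega))

end IsMutationSite

theorem stmt7_general (r : ℕ) (R : ℕ → ℤ → K)
    (hRnz : ∀ i : ℕ, ∀ k : ℤ, i ≤ r + 1 → R i k ≠ 0)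
    (hR0 : ∀ k : ℤ, R 0 k = 1)
    (hQ : ∀ i : ℕ, ∀ k : ℤ, 1 ≤ i → i ≤ r →
      R i (k + 1) * R i (k - 1) = R i k ^ 2 + R (i + 1) k * R (i - 1) k)
    (m : ℕ → ℤ)
    (i : ℕ) (hi1 : 1 ≤ i) (hi2 : i ≤ r - 1)
    (hcase : (m (i + 1) = m i + 1 ∨ m (i + 1) = m i) ∧ (2 ≤ i → m (i - 1) = m i))
    (m' : ℕ → ℤ) (hm' : m' = fun j => if j = i then m i + 1 else m j) :
    yQ r R m' (2 * i - 1) = yQ r R m (2 * i - 1) + yQ r R m (2 * i) ∧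
    yQ r R m' (2 * i) =
      yQ r R m (2 * i + 1) * yQ r R m (2 * i) /
        (yQ r R m (2 * i - 1) + yQ r R m (2 * i)) ∧
    yQ r R m' (2 * i + 1) =
      yQ r R m (2 * i + 1) * yQ r R m (2 * i - 1) /
        (yQ r R m (2 * i - 1) + yQ r R m (2 * i)) ∧
    (m (i + 1) = m i →
      yQ r R m' (2 * i + 2) =
        yQ r R m (2 * i + 2) * yQ r R m (2 * i - 1) /
          (yQ r R m (2 * i - 1) + yQ r R m (2 * i))) ∧
    (∀ j, 1 ≤ j → j ≤ 2 * r + 1 → j ≠ 2 * i - 1 → j ≠ 2 * i → j ≠ 2 * i + 1 →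
      (m (i + 1) = m i → j ≠ 2 * i + 2) → yQ r R m' j = yQ r R m j) := by
  obtain rfl : m' = mutate m i := by
    rw [hm']
    funext j
    simp only [mutate, Function.update_apply]
  have hs : IsMutationSite r m i := ⟨hi1, by omega, hcase.1, hcase.2⟩
  have hQi : ∀ k, R i (k + 1) * R i (k - 1) = R i k ^ 2 + R (i + 1) k * R (i - 1) k :=
    fun k => hQ i k hi1 (by omega)
  exact ⟨hs.yQ_mutate_two_mul_sub_one hRnz hR0 hQi, hs.yQ_mutate_two_mul hRnz hR0 hQi,
    hs.yQ_mutate_two_mul_add_one hRnz hR0 hQi, hs.yQ_mutate_two_mul_add_two hRnz hR0 hQi,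
    fun j hj _ h₁ h₂ h₃ h₄ => hs.yQ_mutate_of_ne hj h₁ h₂ h₃ h₄⟩

/-- Theorem 2.11 of Di Francesco–Kedem: for a solution of the `A_r` `Q`-system, the
explicit weights `y_j(m)` satisfy the cluster-mutation relations under the mutation
`μ_i : m ↦ m'` in case (i) (`m_{i+1} = m_i + 1`) and case (ii) (`m_{i+1} = m_i`),
with `m_{i-1} = m_i` when `i ≥ 2`. -/
theorem stmt7 (r : ℕ) (hr : 2 ≤ r) (R : ℕ → ℤ → K)
    (hRnz : ∀ i : ℕ, ∀ k : ℤ, i ≤ r + 1 → R i k ≠ 0)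
    (hR0 : ∀ k : ℤ, R 0 k = 1) (hRr : ∀ k : ℤ, R (r + 1) k = 1)
    (hQ : ∀ i : ℕ, ∀ k : ℤ, 1 ≤ i → i ≤ r →
      R i (k + 1) * R i (k - 1) = R i k ^ 2 + R (i + 1) k * R (i - 1) k)
    (m : ℕ → ℤ) (hm : ∀ j, 1 ≤ j → j ≤ r - 1 → |m (j + 1) - m j| ≤ 1)
    (i : ℕ) (hi1 : 1 ≤ i) (hi2 : i ≤ r - 1)
    (hcase : (m (i + 1) = m i + 1 ∨ m (i + 1) = m i) ∧ (2 ≤ i → m (i - 1) = m i))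
    (m' : ℕ → ℤ) (hm' : m' = fun j => if j = i then m i + 1 else m j) :
    yQ r R m' (2 * i - 1) = yQ r R m (2 * i - 1) + yQ r R m (2 * i) ∧
    yQ r R m' (2 * i) =
      yQ r R m (2 * i + 1) * yQ r R m (2 * i) /
        (yQ r R m (2 * i - 1) + yQ r R m (2 * i)) ∧
    yQ r R m' (2 * i + 1) =
      yQ r R m (2 * i + 1) * yQ r R m (2 * i - 1) /
        (yQ r R m (2 * i - 1) + yQ r R m (2 * i)) ∧
    (m (i + 1) = m i →
      yQ r R m' (2 * i + 2) =
        yQ r R m (2 * i + 2) * yQ r R m (2 * i - 1) /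
          (yQ r R m (2 * i - 1) + yQ r R m (2 * i))) ∧
    (∀ j, 1 ≤ j → j ≤ 2 * r + 1 → j ≠ 2 * i - 1 → j ≠ 2 * i → j ≠ 2 * i + 1 →
      (m (i + 1) = m i → j ≠ 2 * i + 2) → yQ r R m' j = yQ r R m j) :=
  stmt7_general r R hRnz hR0 hQ m i hi1 hi2 hcase m' hm'

end Stmt7
end

section
/- Let A be a (possibly noncommutative) ring with 1, r ≥ 0, and y_1, …, y_{2r+1} ∈ A. In the formal power series ring A[[t]], define G_{2r+2} = 1 and, for s = 2r+1 down to 1, G_s = (1 − t·G_{s+1}·y_s)⁻¹, where the inverse is the (two-sided) power series inverse, which exists since each series 1 − t·G_{s+1}·y_s has constant term 1. Set F = G_1 (the canonical form of the finite noncommutative Stieltjes continued fraction) and write F = Σ_{n≥0} F_n·t^n with F_n ∈ A. Define polynomials p_s, q_s ∈ A[t] by p_0 = 1, p_1 = 1 − t·y_1, p_{s+1} = p_s − t·y_{s+1}·p_{s−1}, and q_0 = 1, q_1 = 1, q_{s+1} = q_s − t·y_{s+1}·q_{s−1}, and set P = p_{2r+1}, Q = q_{2r+1}. Then P·F = Q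 in A[[t]]; consequently, writing P = Σ_{i=0}^{r+1} (−1)^i·P_i·t^i with P_i ∈ A (so P_0 = 1), the coefficients of F satisfy the linear recursion Σ_{i=0}^{r+1} (−1)^i·P_i·F_{n+r+1−i} = 0 for all n ≥ 0. -/
namespace Stmt9

open PowerSeries

/-- The canonical-form noncommutative Stieltjes continued fraction, built from the top:
`Gaux y N j` is `G_{N-j}`, where `G_N = 1` and `G_s = (1 - t·G_{s+1}·y_s)⁻¹`
(two-sided power series inverse, which exists as the series has constant term `1`). -/
noncomputable def Gaux (A : Type*) [Ring A] (y : ℕ → A) (N : ℕ) : ℕ → PowerSeries A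
  | 0 => 1
  | (j+1) => PowerSeries.invOfUnit
      (1 - PowerSeries.X * Gaux A y N j * PowerSeries.C (y (N - (j + 1)))) 1

/-- `p_0 = 1`, `p_1 = 1 - t·y_1`, `p_{s+1} = p_s - t·y_{s+1}·p_{s-1}`. -/
noncomputable def pPoly (A : Type*) [Ring A] (y : ℕ → A) : ℕ → PowerSeries A
  | 0 => 1
  | 1 => 1 - PowerSeries.X * PowerSeries.C (y 1)
  | (s+2) => pPoly A y (s + 1) - PowerSeries.X * PowerSeries.C (y (s + 2)) * pPoly A y s

/-- `q_0 = 1`, `q_1 = 1`, `q_{s+1} = q_s - t·y_{s+1}·q_{s-1}`. -/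
noncomputable def qPoly (A : Type*) [Ring A] (y : ℕ → A) : ℕ → PowerSeries A
  | 0 => 1
  | 1 => 1
  | (s+2) => qPoly A y (s + 1) - PowerSeries.X * PowerSeries.C (y (s + 2)) * qPoly A y s

/-!
The continued fraction satisfies `G_k = 1 + t G_{k+1} y_k G_k` for `k < N`, and this also holds at
`k = N` once we put `G_{N+1} = 0`. Feeding it into the three-term recursion shared
by `p_s` and `q_s` gives `p_s G_1 - q_s = t^{s+1} G_{s+2} y_{s+1} G_{s+1} ⋯ y_1 G_1`; at
`s = N - 1` the factor `G_{N+1}` vanishes, so `P F = Q`. As `P` has degree at most `r + 1` and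
`Q` degree at most `r`, comparing coefficients of `t^{n+r+1}` in `P F = Q` gives the recursion.
-/

section

variable {A : Type*} [Ring A]

lemma X_mul_mul_X_pow_mul (a b : A⟦X⟧) (k : ℕ) : X * a * (X ^ k * b) = X ^ (k + 1) * (a * b) := by
  rw [mul_assoc, ← mul_assoc a, (commute_X_pow a k).eq, pow_succ']
  noncomm_ring

lemma coeff_mul_eq_sum_range_of_coeff_eq_zero {f g : A⟦X⟧} {d n : ℕ} (hdn : d ≤ n)
    (hf : ∀ i, d < i → coeff i f = 0) :
    coeff n (f * g) = ∑ i ∈ Finset.range (d + 1), coeff i f * coeff (n - i) g := by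
  rw [coeff_mul, Finset.Nat.sum_antidiagonal_eq_sum_range_succ (fun i j => coeff i f * coeff j g)]
  refine (Finset.sum_subset (fun i hi => ?_) fun i _ hi => ?_).symm
  · simp only [Finset.mem_range] at hi ⊢
    omega
  · rw [hf i (by simpa using hi), zero_mul]

noncomputable def weightedProduct (y : ℕ → A) (G : ℕ → A⟦X⟧) : ℕ → A⟦X⟧
  | 0 => 1
  | k + 1 => C (y (k + 1)) * G (k + 1) * weightedProduct y G k

lemma pPoly_mul_sub_qPoly (y : ℕ → A) (G : ℕ → A⟦X⟧) :
    ∀ s, (∀ k, 1 ≤ k → k ≤ s + 1 → G k - 1 = X * G (k + 1) * C (y k) * G k) →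
      pPoly A y s * G 1 - qPoly A y s = X ^ (s + 1) * (G (s + 2) * weightedProduct y G (s + 1))
  | 0, hG => by
    simp only [pPoly, qPoly, weightedProduct, one_mul, mul_one, zero_add, pow_one]
    rw [hG 1 le_rfl le_rfl]
    noncomm_ring
  | 1, hG => by
    calc pPoly A y 1 * G 1 - qPoly A y 1
        = X * ((G 2 - 1) * (C (y 1) * G 1)) := by
          have hG₁ := hG 1 le_rfl (by omega)
          simp only [pPoly, qPoly]
          rw [show (1 - X * C (y 1)) * G 1 - 1 = (G 1 - 1) - X * C (y 1) * G 1 by noncomm_ring,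
            hG₁]
          noncomm_ring
      _ = X ^ 2 * (G 3 * weightedProduct y G 2) := by
          rw [hG 2 (by omega) le_rfl]
          simp only [weightedProduct, pow_two]
          noncomm_ring
  | s + 2, hG => by
    have IH₁ := pPoly_mul_sub_qPoly y G (s + 1) fun k hk hks => hG k hk (by omega)
    have IH₀ := pPoly_mul_sub_qPoly y G s fun k hk hks => hG k hk (by omega)
    calc pPoly A y (s + 2) * G 1 - qPoly A y (s + 2)
        = (pPoly A y (s + 1) * G 1 - qPoly A y (s + 1))
            - X * C (y (s + 2)) * (pPoly A y s * G 1 - qPoly A y s) := by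
          simp only [pPoly, qPoly]
          noncomm_ring
      _ = X ^ (s + 2) * ((G (s + 3) - 1) * weightedProduct y G (s + 2)) := by
          rw [IH₁, IH₀, X_mul_mul_X_pow_mul]
          simp only [weightedProduct]
          noncomm_ring
      _ = X ^ (s + 3) * (G (s + 4) * weightedProduct y G (s + 3)) := by
          rw [hG (s + 3) (by omega) le_rfl, pow_succ]
          simp only [weightedProduct]
          noncomm_ring

lemma Gaux_succ_sub_one (y : ℕ → A) (N j : ℕ) :
    Gaux A y N (j + 1) - 1 = X * Gaux A y N j * C (y (N - (j + 1))) * Gaux A y N (j + 1) := by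
  have h := mul_invOfUnit (1 - X * Gaux A y N j * C (y (N - (j + 1)))) 1 (by simp [mul_assoc])
  rw [sub_mul, one_mul] at h
  exact sub_eq_iff_comm.mp h

/-- `G_s`, indexed from the bottom unlike `Gaux`, with `G_{N+1} = 0`. -/
noncomputable def stieltjesG (y : ℕ → A) (N s : ℕ) : A⟦X⟧ :=
  if s ≤ N then Gaux A y N (N - s) else 0

lemma stieltjesG_sub_one (y : ℕ → A) {N k : ℕ} (hk : k ≤ N) :
    stieltjesG y N k - 1 = X * stieltjesG y N (k + 1) * C (y k) * stieltjesG y N k := by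
  rcases hk.eq_or_lt with rfl | hlt
  · simp [stieltjesG, Gaux]
  · obtain ⟨j, hj⟩ : ∃ j, N - k = j + 1 := ⟨N - k - 1, by omega⟩
    have hNj : N - (j + 1) = k := by omega
    simp only [stieltjesG, hk, Nat.succ_le_of_lt hlt, if_true, hj,
      show N - (k + 1) = j by omega]
    rw [Gaux_succ_sub_one, hNj]

lemma pPoly_mul_Gaux (y : ℕ → A) (s : ℕ) : pPoly A y s * Gaux A y (s + 1) s = qPoly A y s := by
  have h := pPoly_mul_sub_qPoly y (stieltjesG y (s + 1)) s
    fun k _ hk => stieltjesG_sub_one y hk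
  simpa [stieltjesG, sub_eq_zero] using h

lemma coeff_pPoly_eq_zero (y : ℕ → A) : ∀ s i, s + 1 < 2 * i → coeff i (pPoly A y s) = 0
  | 0, i, h => by simp [pPoly, coeff_one, show i ≠ 0 by omega]
  | 1, i + 1, h => by simp [pPoly, coeff_one, coeff_X, show i ≠ 0 by omega]
  | s + 2, i + 1, h => by
    simp only [pPoly, map_sub, mul_assoc, coeff_succ_X_mul, coeff_C_mul,
      coeff_pPoly_eq_zero y (s + 1) (i + 1) (by omega), coeff_pPoly_eq_zero y s i (by omega),
      mul_zero, sub_zero]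

lemma coeff_qPoly_eq_zero (y : ℕ → A) : ∀ s i, s < 2 * i → coeff i (qPoly A y s) = 0
  | 0, i, h => by simp [qPoly, coeff_one, show i ≠ 0 by omega]
  | 1, i, h => by simp [qPoly, coeff_one, show i ≠ 0 by omega]
  | s + 2, i + 1, h => by
    simp only [qPoly, map_sub, mul_assoc, coeff_succ_X_mul, coeff_C_mul,
      coeff_qPoly_eq_zero y (s + 1) (i + 1) (by omega), coeff_qPoly_eq_zero y s i (by omega),
      mul_zero, sub_zero]

end

/-- Theorem 3.13 of Di Francesco–Kedem: with `F = G_1` the canonical form of the finite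
noncommutative Stieltjes continued fraction with weights `y_1, …, y_{2r+1}`, and `P = p_{2r+1}`,
`Q = q_{2r+1}`, one has `P·F = Q` in `A⟦t⟧`; consequently, writing
`P = Σ_{i=0}^{r+1} (-1)^i·P_i·t^i` (so `P_i = (-1)^i·coeff_i P`), the coefficients
`F_n` of `F` satisfy the linear recursion `Σ_{i=0}^{r+1} (-1)^i·P_i·F_{n+r+1-i} = 0`
for all `n ≥ 0`. -/
theorem stmt9 (A : Type*) [Ring A] (r : ℕ) (y : ℕ → A) :
    pPoly A y (2 * r + 1) * Gaux A y (2 * r + 2) (2 * r + 1) = qPoly A y (2 * r + 1) ∧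
    ∀ n : ℕ,
      ∑ i ∈ Finset.range (r + 2),
        (-1 : A) ^ i * ((-1 : A) ^ i * PowerSeries.coeff i (pPoly A y (2 * r + 1))) *
          PowerSeries.coeff (n + r + 1 - i) (Gaux A y (2 * r + 2) (2 * r + 1)) = 0 := by
  have hPF := pPoly_mul_Gaux y (2 * r + 1)
  refine ⟨hPF, fun n => ?_⟩
  simp only [← mul_assoc, ← pow_add, Even.neg_one_pow ⟨_, rfl⟩, one_mul]
  rw [← coeff_mul_eq_sum_range_of_coeff_eq_zero (by omega)
      fun i hi => coeff_pPoly_eq_zero y _ i (by omega),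
    hPF, coeff_qPoly_eq_zero y _ _ (by omega)]

end Stmt9
end

section
/- Let D be a division ring and R : ℤ → D a sequence. Assume the genericity condition: for every finite square submatrix M of the bi-infinite Hankel matrix H = (R_{−a−b})_{a,b∈ℤ} (rows and columns indexed by arbitrary finite subsets of ℤ of equal cardinality) and every entry position (p,q) of M, the quasi-determinant |M|_{p,q} is nonzero. Then the quasi-Wronskians of R satisfy the discrete noncommutative Hirota equation: for all i ≥ 1 and n ∈ ℤ, Δ_{i+1,n} = Δ_{i,n+1} − Δ_{i,n}·(Δ_{i,n−1}⁻¹ − Δ_{i−1,n}⁻¹)·Δ_{i,n}, with the convention Δ_{0,n}⁻¹ = 0 (so for i = 1 this reads Δ_{2,n} = Δ_{1,n+1} − Δ_{1,n}·Δ_{1,n−1}⁻¹·Δ_{1,n}). -/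
/-! If every quasi-minor of a square matrix `A` is nonzero, then `A` is invertible and
`(A⁻¹)_{q,p} = |A|_{p,q}⁻¹` (Gelfand–Retakh): by induction on the size, the recursive formula for
`|A|_{p,q}` is the Schur complement of the pivot `(p, q)` computed with the inverse of `A^{p,q}`.
Let `M` be the Hankel block with `|M|_{0,0} = Δ_{i+1,n}`. Deleting its last or first rows and
columns gives the blocks of `Δ_{i,n+1}`, `Δ_{i,n}` (twice), `Δ_{i,n-1}` and `Δ_{i-1,n}`. Deleting a
row and a column of an invertible matrix changes its inverse by a rank-one correction, so all these
quasi-determinants are expressed through entries of `M⁻¹`, and the Hirota equation becomes a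
scalar identity between eight of them (a noncommutative Desnanot–Jacobi identity). -/

namespace Stmt10

/-- The quasi-determinant `|A|_{p,q}` of an `n×n` matrix over a division ring, defined
recursively by `|A|_{1,1} = a_{1,1}` for `n = 1` and, for `n ≥ 2`,
`|A|_{p,q} = a_{p,q} - Σ_{i≠p, j≠q} a_{p,j}·(|A^{p,q}|_{i,j})⁻¹·a_{i,q}`,
where `A^{p,q}` deletes row `p` and column `q` (inverses in `D`, with `0⁻¹ = 0`). -/
def quasiDet {D : Type*} [DivisionRing D] :
    (n : ℕ) → Matrix (Fin n) (Fin n) D → Fin n → Fin n → D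
  | 0, _, p, _ => p.elim0
  | 1, A, p, q => A p q
  | (n+2), A, p, q =>
      A p q - ∑ i : Fin (n + 1), ∑ j : Fin (n + 1),
        A p (q.succAbove j) *
          (quasiDet (n + 1) (A.submatrix p.succAbove q.succAbove) i j)⁻¹ *
          A (p.succAbove i) q

/-- The quasi-Wronskians of a sequence `R : ℤ → D`:
`Δ_{i,n} = |(R_{n+i+1-a-b})_{1≤a,b≤i}|_{1,1}` for `i ≥ 1`, and `Δ_{0,n} = 0`. -/
def Delta {D : Type*} [DivisionRing D] (R : ℤ → D) : ℕ → ℤ → D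
  | 0, _ => 0
  | (i+1), n => quasiDet (i + 1)
      (Matrix.of fun a b : Fin (i + 1) =>
        R (n + (i + 1 : ℕ) + 1 - ((a : ℤ) + 1) - ((b : ℤ) + 1))) 0 0

open Matrix Function

section Schur

variable {D : Type*} [DivisionRing D] {n : ℕ} (A : Matrix (Fin (n + 1)) (Fin (n + 1)) D)
  (p q : Fin (n + 1))

def schurComplement (C : Matrix (Fin n) (Fin n) D) : D :=
  A p q - (fun j => A p (q.succAbove j)) ᵥ* C ⬝ᵥ fun i => A (p.succAbove i) q

variable {A p q}

lemma mul_apply_succAbove {m : Type*} (P : Matrix m (Fin (n + 1)) D) (c : m) (b : Fin (n + 1)) :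
    (P * A) c b = P c p * A p b + ∑ i, P c (p.succAbove i) * A (p.succAbove i) b := by
  rw [mul_apply, Fin.sum_univ_succAbove _ p]

lemma insertNth_vecMul (x : D) (w : Fin n → D) :
    Fin.insertNth p x w ᵥ* A =
      Fin.insertNth q (x * A p q + w ⬝ᵥ fun i => A (p.succAbove i) q)
        (x • (fun j => A p (q.succAbove j)) + w ᵥ* A.submatrix p.succAbove q.succAbove) := by
  funext b
  rcases Fin.eq_self_or_eq_succAbove q b with rfl | ⟨b, rfl⟩ <;>
    simp [vecMul, dotProduct, Fin.sum_univ_succAbove _ p]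

lemma mul_schurComplement_eq_one {P : Matrix (Fin (n + 1)) (Fin (n + 1)) D}
    {C : Matrix (Fin n) (Fin n) D} (hP : P * A = 1)
    (hC : A.submatrix p.succAbove q.succAbove * C = 1) :
    P q p * schurComplement A p q C = 1 := by
  set w := fun i => P q (p.succAbove i)
  set u := fun j => A p (q.succAbove j)
  have hwB : w ᵥ* A.submatrix p.succAbove q.succAbove = -(P q p • u) := by
    funext b
    have h := congrFun (congrFun hP q) (q.succAbove b)
    rw [mul_apply_succAbove (p := p), one_apply_ne (Fin.succAbove_ne q b).symm] at h
    simpa [vecMul, dotProduct, u, w, eq_neg_iff_add_eq_zero, add_comm] using h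
  have hw : w = -(P q p • (u ᵥ* C)) := by
    rw [← vecMul_one w, ← hC, ← vecMul_vecMul, hwB, neg_vecMul, smul_vecMul]
  have hqq : P q p * A p q + w ⬝ᵥ (fun i => A (p.succAbove i) q) = 1 := by
    have h := congrFun (congrFun hP q) q
    rwa [mul_apply_succAbove (p := p), one_apply_eq] at h
  rw [← hqq, hw, neg_dotProduct, smul_dotProduct, smul_eq_mul, schurComplement, mul_sub,
    sub_eq_add_neg]

lemma exists_mul_eq_one_of_schurComplement_ne_zero {C : Matrix (Fin n) (Fin n) D}
    (hC : C * A.submatrix p.succAbove q.succAbove = 1) (hs : schurComplement A p q C ≠ 0) :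
    ∃ P : Matrix (Fin (n + 1)) (Fin (n + 1)) D, P * A = 1 := by
  set s := schurComplement A p q C
  set u := fun j => A p (q.succAbove j)
  set v := fun i => A (p.succAbove i) q
  set r : Fin (n + 1) → D := Fin.insertNth p 1 (-(u ᵥ* C))
  have hr : r ᵥ* A = Fin.insertNth q s 0 := by
    rw [insertNth_vecMul (q := q), one_smul, one_mul, neg_vecMul, vecMul_vecMul, hC, vecMul_one,
      add_neg_cancel, neg_dotProduct, ← sub_eq_add_neg]
    rfl
  -- Row `q` of the inverse is `s⁻¹ • r`; row `q.succAbove j` is row `j` of `C` (placed off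
  -- column `p`) minus the multiple of `r` that clears its entry in column `q` of the product.
  let P : Matrix (Fin (n + 1)) (Fin (n + 1)) D :=
    Fin.insertNth (α := fun _ => Fin (n + 1) → D) q (s⁻¹ • r)
      fun j => Fin.insertNth p 0 (C j) - ((C *ᵥ v) j * s⁻¹) • r
  refine ⟨P, funext fun c => ?_⟩
  rw [mul_apply_eq_vecMul]
  rcases Fin.eq_self_or_eq_succAbove q c with rfl | ⟨j, rfl⟩
  · rw [show P c = s⁻¹ • r from Fin.insertNth_apply_same .., smul_vecMul, hr]
    funext b
    rcases Fin.eq_self_or_eq_succAbove c b with rfl | ⟨b, rfl⟩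
    · simp [inv_mul_cancel₀ hs]
    · simp [one_apply_ne (Fin.succAbove_ne _ b).symm]
  · rw [show P (q.succAbove j) = _ from Fin.insertNth_apply_succAbove .., sub_vecMul, smul_vecMul,
      hr, insertNth_vecMul (q := q)]
    funext b
    rcases Fin.eq_self_or_eq_succAbove q b with rfl | ⟨b, rfl⟩
    · simp only [Pi.sub_apply, Pi.smul_apply, Fin.insertNth_apply_same, smul_eq_mul, zero_mul,
        zero_add, inv_mul_cancel_right₀ hs, one_apply_ne (Fin.succAbove_ne _ j)]
      exact sub_self _
    · simp [← mul_apply_eq_vecMul, hC, one_apply]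

lemma sum_succAbove_mul_eq {P : Matrix (Fin (n + 1)) (Fin (n + 1)) D} (hP : P * A = 1)
    (c b : Fin (n + 1)) :
    ∑ i, P c (p.succAbove i) * A (p.succAbove i) b = (1 : Matrix _ _ D) c b - P c p * A p b := by
  rw [← hP, mul_apply_succAbove (p := p), add_sub_cancel_left]

lemma submatrix_inv_mul_eq_one {P : Matrix (Fin (n + 1)) (Fin (n + 1)) D} (hP : P * A = 1)
    (hqp : P q p ≠ 0) :
    (of fun j i => P (q.succAbove j) (p.succAbove i) -
        P (q.succAbove j) p * (P q p)⁻¹ * P q (p.succAbove i)) *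
      A.submatrix p.succAbove q.succAbove = 1 := by
  ext j b
  simp only [mul_apply, submatrix_apply, of_apply, sub_mul, Finset.sum_sub_distrib, mul_assoc,
    ← Finset.mul_sum]
  rw [sum_succAbove_mul_eq hP, sum_succAbove_mul_eq hP, one_apply_ne (Fin.succAbove_ne q b).symm,
    zero_sub, mul_neg, inv_mul_cancel_left₀ hqp, mul_neg, sub_neg_eq_add, sub_add_cancel]
  simp [one_apply]

end Schur

section QuasiInverse

variable {D : Type*} [DivisionRing D] {n : ℕ}

def quasiInv (n : ℕ) (A : Matrix (Fin n) (Fin n) D) : Matrix (Fin n) (Fin n) D :=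
  of fun q p => (quasiDet n A p q)⁻¹

lemma quasiDet_eq_inv_quasiInv (A : Matrix (Fin n) (Fin n) D) (p q : Fin n) :
    quasiDet n A p q = (quasiInv n A q p)⁻¹ :=
  (inv_inv _).symm

lemma quasiDet_succ (A : Matrix (Fin (n + 1)) (Fin (n + 1)) D) (p q : Fin (n + 1)) :
    quasiDet (n + 1) A p q =
      schurComplement A p q (quasiInv n (A.submatrix p.succAbove q.succAbove)) := by
  cases n with
  | zero => simp [quasiDet, schurComplement]
  | succ n => simp [quasiDet, schurComplement, quasiInv, vecMul, dotProduct, Finset.sum_mul]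

def QuasiGeneric {α β : Type*} (K : Matrix α β D) : Prop :=
  ∀ (k : ℕ) (ρ : Fin (k + 1) → α) (γ : Fin (k + 1) → β), Injective ρ → Injective γ →
    ∀ p q, quasiDet (k + 1) (K.submatrix ρ γ) p q ≠ 0

namespace QuasiGeneric

lemma submatrix {α β α' β' : Type*} {K : Matrix α β D} (hK : QuasiGeneric K) {ρ : α' → α}
    {γ : β' → β} (hρ : Injective ρ) (hγ : Injective γ) : QuasiGeneric (K.submatrix ρ γ) :=
  fun k ρ' γ' hρ' hγ' => hK k (ρ ∘ ρ') (γ ∘ γ') (hρ.comp hρ') (hγ.comp hγ')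

lemma submatrix_succAbove {A : Matrix (Fin (n + 1)) (Fin (n + 1)) D} (hA : QuasiGeneric A)
    (p q : Fin (n + 1)) : QuasiGeneric (A.submatrix p.succAbove q.succAbove) :=
  hA.submatrix Fin.succAbove_right_injective Fin.succAbove_right_injective

variable {A : Matrix (Fin (n + 1)) (Fin (n + 1)) D}

lemma quasiDet_ne_zero (hA : QuasiGeneric A) (p q : Fin (n + 1)) : quasiDet (n + 1) A p q ≠ 0 :=
  hA n id id injective_id injective_id p q

lemma quasiInv_apply_ne_zero (hA : QuasiGeneric A) (q p : Fin (n + 1)) :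
    quasiInv (n + 1) A q p ≠ 0 :=
  inv_ne_zero (hA.quasiDet_ne_zero p q)

/- Over a division ring a one-sided inverse of a square matrix is two-sided (`mul_eq_one_comm`),
so only left inverses have to be produced. -/
theorem quasiInv_mul_eq_one {A : Matrix (Fin n) (Fin n) D} (hA : QuasiGeneric A) :
    quasiInv n A * A = 1 := by
  induction n with
  | zero => exact Subsingleton.elim _ _
  | succ n ih =>
    have hsub (p q : Fin (n + 1)) := ih (hA.submatrix_succAbove p q)
    obtain ⟨P, hP⟩ := exists_mul_eq_one_of_schurComplement_ne_zero (hsub 0 0)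
      (quasiDet_succ A 0 0 ▸ hA.quasiDet_ne_zero 0 0)
    suffices P = quasiInv (n + 1) A from this ▸ hP
    ext q p
    refine eq_inv_of_mul_eq_one_left ?_
    rw [quasiDet_succ]
    exact mul_schurComplement_eq_one hP (mul_eq_one_comm.mp (hsub p q))

theorem mul_quasiInv_eq_one {A : Matrix (Fin n) (Fin n) D} (hA : QuasiGeneric A) :
    A * quasiInv n A = 1 :=
  mul_eq_one_comm.mp hA.quasiInv_mul_eq_one

lemma quasiInv_submatrix_apply (hA : QuasiGeneric A) (p q : Fin (n + 1)) (j i : Fin n) :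
    quasiInv n (A.submatrix p.succAbove q.succAbove) j i =
      quasiInv (n + 1) A (q.succAbove j) (p.succAbove i) -
        quasiInv (n + 1) A (q.succAbove j) p * (quasiInv (n + 1) A q p)⁻¹ *
          quasiInv (n + 1) A q (p.succAbove i) := by
  have hinv := submatrix_inv_mul_eq_one hA.quasiInv_mul_eq_one (hA.quasiInv_apply_ne_zero q p)
  rw [← left_inv_eq_right_inv hinv (hA.submatrix_succAbove p q).mul_quasiInv_eq_one]
  rfl

end QuasiGeneric

end QuasiInverse

section DesnanotJacobi

variable {D : Type*} [DivisionRing D]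

/- The variables are the entries of `N = M⁻¹` at rows/columns `0`, `1` and the last index `l`;
`nₗₗ - nₗ₀ * n₀₀⁻¹ * n₀ₗ` etc. are entries of the inverse of `M` with its first row and column
deleted. -/
lemma desnanotJacobi_inverse_entries {n₀₀ n₀ₗ nₗ₀ nₗₗ : D} (n₁₀ n₀₁ n₁ₗ nₗ₁ : D)
    (h₀₀ : n₀₀ ≠ 0) (h₀ₗ : n₀ₗ ≠ 0) (hₗ₀ : nₗ₀ ≠ 0) (hₗₗ : nₗₗ ≠ 0)
    (hμ : n₁ₗ - n₁₀ * n₀₀⁻¹ * n₀ₗ ≠ 0) (hν : nₗ₁ - nₗ₀ * n₀₀⁻¹ * n₀₁ ≠ 0)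
    (ht : nₗₗ - nₗ₀ * n₀₀⁻¹ * n₀ₗ ≠ 0) :
    n₀₀⁻¹ = (n₀₀ - n₀ₗ * nₗₗ⁻¹ * nₗ₀)⁻¹ - (n₁₀ - n₁ₗ * n₀ₗ⁻¹ * n₀₀)⁻¹ *
        ((n₁ₗ - n₁₀ * n₀₀⁻¹ * n₀ₗ) * (nₗₗ - nₗ₀ * n₀₀⁻¹ * n₀ₗ)⁻¹ * (nₗ₁ - nₗ₀ * n₀₀⁻¹ * n₀₁)) *
        (n₀₁ - n₀₀ * nₗ₀⁻¹ * nₗ₁)⁻¹ := by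
  set μ := n₁ₗ - n₁₀ * n₀₀⁻¹ * n₀ₗ
  set ν := nₗ₁ - nₗ₀ * n₀₀⁻¹ * n₀₁
  set t := nₗₗ - nₗ₀ * n₀₀⁻¹ * n₀ₗ
  have hleft : (n₁₀ - n₁ₗ * n₀ₗ⁻¹ * n₀₀)⁻¹ * μ = -(n₀₀⁻¹ * n₀ₗ) := by
    rw [show n₁₀ - n₁ₗ * n₀ₗ⁻¹ * n₀₀ = -(μ * n₀ₗ⁻¹ * n₀₀) by
      simp [μ, sub_mul, mul_assoc, h₀₀, h₀ₗ]]
    simp [_root_.mul_inv_rev, mul_assoc, hμ]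
  have hright : ν * (n₀₁ - n₀₀ * nₗ₀⁻¹ * nₗ₁)⁻¹ = -(nₗ₀ * n₀₀⁻¹) := by
    rw [show n₀₁ - n₀₀ * nₗ₀⁻¹ * nₗ₁ = -(n₀₀ * nₗ₀⁻¹ * ν) by
      simp [ν, mul_sub, mul_assoc, h₀₀, hₗ₀]]
    simp [_root_.mul_inv_rev, ← mul_assoc, hν]
  have hwoodbury : (n₀₀ - n₀ₗ * nₗₗ⁻¹ * nₗ₀)⁻¹ = n₀₀⁻¹ + n₀₀⁻¹ * n₀ₗ * t⁻¹ * nₗ₀ * n₀₀⁻¹ := by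
    refine inv_eq_of_mul_eq_one_right ?_
    have h : (n₀₀ - n₀ₗ * nₗₗ⁻¹ * nₗ₀) * (n₀₀⁻¹ * n₀ₗ) = n₀ₗ * nₗₗ⁻¹ * t := by
      simp [t, mul_sub, sub_mul, mul_assoc, h₀₀, hₗₗ]
    calc (n₀₀ - n₀ₗ * nₗₗ⁻¹ * nₗ₀) * (n₀₀⁻¹ + n₀₀⁻¹ * n₀ₗ * t⁻¹ * nₗ₀ * n₀₀⁻¹)
        = (n₀₀ - n₀ₗ * nₗₗ⁻¹ * nₗ₀) * n₀₀⁻¹ +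
            (n₀₀ - n₀ₗ * nₗₗ⁻¹ * nₗ₀) * (n₀₀⁻¹ * n₀ₗ) * t⁻¹ * nₗ₀ * n₀₀⁻¹ := by
          noncomm_ring
      _ = 1 := by
          rw [h, mul_assoc (n₀ₗ * nₗₗ⁻¹), mul_inv_cancel₀ ht]
          simp [sub_mul, mul_assoc, h₀₀]
  calc n₀₀⁻¹ = (n₀₀ - n₀ₗ * nₗₗ⁻¹ * nₗ₀)⁻¹ - (-(n₀₀⁻¹ * n₀ₗ)) * t⁻¹ * (-(nₗ₀ * n₀₀⁻¹)) := by
        rw [hwoodbury]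
        noncomm_ring
    _ = _ := by
        rw [← hleft, ← hright]
        noncomm_ring

theorem QuasiGeneric.quasiDet_desnanotJacobi {k : ℕ} {M : Matrix (Fin (k + 3)) (Fin (k + 3)) D}
    (hM : QuasiGeneric M) :
    quasiDet (k + 3) M 0 0 =
      quasiDet (k + 2) (M.submatrix Fin.castSucc Fin.castSucc) 0 0 -
        quasiDet (k + 2) (M.submatrix Fin.castSucc Fin.succ) 0 0 *
          ((quasiDet (k + 2) (M.submatrix Fin.succ Fin.succ) 0 0)⁻¹ -
            (quasiDet (k + 1)
              ((M.submatrix Fin.succ Fin.succ).submatrix Fin.castSucc Fin.castSucc) 0 0)⁻¹) *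
          quasiDet (k + 2) (M.submatrix Fin.succ Fin.castSucc) 0 0 := by
  set V := M.submatrix Fin.succ Fin.succ
  have hV : QuasiGeneric V := hM.submatrix_succAbove 0 0
  have hV_apply (j i : Fin (k + 2)) : quasiInv (k + 2) V j i =
      quasiInv (k + 3) M j.succ i.succ -
        quasiInv (k + 3) M j.succ 0 * (quasiInv (k + 3) M 0 0)⁻¹ * quasiInv (k + 3) M 0 i.succ :=
    hM.quasiInv_submatrix_apply 0 0 j i
  have hLL := hM.quasiInv_submatrix_apply (Fin.last _) (Fin.last _) 0 0
  have hL0 := hM.quasiInv_submatrix_apply (Fin.last _) 0 0 0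
  have h0L := hM.quasiInv_submatrix_apply 0 (Fin.last _) 0 0
  have hVLL := hV.quasiInv_submatrix_apply (Fin.last _) (Fin.last _) 0 0
  simp only [Fin.succAbove_last, Fin.succAbove_zero, Fin.castSucc_zero, Fin.succ_zero_eq_one]
    at hLL hL0 h0L hVLL
  have hμ := hV_apply 0 (Fin.last _) ▸ hV.quasiInv_apply_ne_zero 0 (Fin.last _)
  have hν := hV_apply (Fin.last _) 0 ▸ hV.quasiInv_apply_ne_zero (Fin.last _) 0
  have ht :=
    hV_apply (Fin.last _) (Fin.last _) ▸ hV.quasiInv_apply_ne_zero (Fin.last _) (Fin.last _)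
  simp only [quasiDet_eq_inv_quasiInv, inv_inv, hLL, hL0, h0L, hVLL, sub_sub_cancel, hV_apply]
  simp only [Fin.succ_zero_eq_one] at hμ hν ht ⊢
  exact desnanotJacobi_inverse_entries _ _ _ _ (hM.quasiInv_apply_ne_zero 0 0)
    (hM.quasiInv_apply_ne_zero 0 (Fin.last _)) (hM.quasiInv_apply_ne_zero (Fin.last _) 0)
    (hM.quasiInv_apply_ne_zero _ _) hμ hν ht

end DesnanotJacobi

section Hankel

variable {α : Type*} (R : ℤ → α)

def hankel : Matrix ℤ ℤ α :=
  of fun a b => R (-a - b)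

def hankelBlock (m : ℤ) (k : ℕ) : Matrix (Fin k) (Fin k) α :=
  of fun a b => R (m - a - b)

lemma hankelBlock_eq_submatrix (m : ℤ) (k : ℕ) :
    hankelBlock R m k =
      (hankel R).submatrix (fun a : Fin k => (a : ℤ)) (fun b : Fin k => (b : ℤ) - m) := by
  ext a b
  simp only [hankelBlock, hankel, of_apply, submatrix_apply]
  ring_nf

variable (m : ℤ) (k : ℕ)

lemma hankelBlock_submatrix_castSucc_castSucc :
    (hankelBlock R m (k + 1)).submatrix Fin.castSucc Fin.castSucc = hankelBlock R m k := by
  ext a b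
  simp [hankelBlock]

lemma hankelBlock_submatrix_castSucc_succ :
    (hankelBlock R m (k + 1)).submatrix Fin.castSucc Fin.succ = hankelBlock R (m - 1) k := by
  ext a b
  simp only [hankelBlock, submatrix_apply, of_apply, Fin.val_castSucc, Fin.val_succ]
  push_cast
  ring_nf

lemma hankelBlock_submatrix_succ_castSucc :
    (hankelBlock R m (k + 1)).submatrix Fin.succ Fin.castSucc = hankelBlock R (m - 1) k := by
  ext a b
  simp only [hankelBlock, submatrix_apply, of_apply, Fin.val_castSucc, Fin.val_succ]
  push_cast
  ring_nf

lemma hankelBlock_submatrix_succ_succ :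
    (hankelBlock R m (k + 1)).submatrix Fin.succ Fin.succ = hankelBlock R (m - 2) k := by
  ext a b
  simp only [hankelBlock, submatrix_apply, of_apply, Fin.val_succ]
  push_cast
  ring_nf

end Hankel

section Hirota

variable {D : Type*} [DivisionRing D]

lemma QuasiGeneric.hankelBlock {R : ℤ → D} (hR : QuasiGeneric (hankel R)) (m : ℤ) (k : ℕ) :
    QuasiGeneric (hankelBlock R m k) := by
  rw [hankelBlock_eq_submatrix]
  exact hR.submatrix (Nat.cast_injective.comp Fin.val_injective)
    (sub_left_injective.comp (Nat.cast_injective.comp Fin.val_injective))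

variable (R : ℤ → D)

lemma Delta_succ (k : ℕ) (n : ℤ) :
    Delta R (k + 1) n = quasiDet (k + 1) (hankelBlock R (n + k) (k + 1)) 0 0 := by
  rw [Delta, hankelBlock]
  congr! 5 with a b
  push_cast
  ring

lemma Delta_two (n : ℤ) :
    Delta R 2 n =
      Delta R 1 (n + 1) -
        Delta R 1 n * ((Delta R 1 (n - 1))⁻¹ - (Delta R 0 n)⁻¹) * Delta R 1 n := by
  simp [Delta, quasiDet, show n + 2 - 1 = n + 1 by ring, show n + 1 - 2 = n - 1 by ring]

lemma Delta_add_three {R : ℤ → D} (hR : QuasiGeneric (hankel R)) (j : ℕ) (n : ℤ) :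
    Delta R (j + 3) n =
      Delta R (j + 2) (n + 1) -
        Delta R (j + 2) n * ((Delta R (j + 2) (n - 1))⁻¹ - (Delta R (j + 1) n)⁻¹) *
          Delta R (j + 2) n := by
  have h := (hR.hankelBlock (n + (j + 2 : ℕ)) (j + 3)).quasiDet_desnanotJacobi
  rw [hankelBlock_submatrix_castSucc_castSucc, hankelBlock_submatrix_castSucc_succ,
    hankelBlock_submatrix_succ_castSucc, hankelBlock_submatrix_succ_succ,
    hankelBlock_submatrix_castSucc_castSucc] at h
  simp only [Delta_succ]
  convert h using 4 <;> push_cast <;> ring_nf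

end Hirota

/-- Theorem 3.21 of Di Francesco–Kedem (discrete noncommutative Hirota equation):
under the genericity assumption that every quasi-determinant of every finite square
submatrix of the Hankel matrix `(R_{-a-b})_{a,b ∈ ℤ}` is nonzero, the quasi-Wronskians
satisfy `Δ_{i+1,n} = Δ_{i,n+1} - Δ_{i,n}·(Δ_{i,n-1}⁻¹ - Δ_{i-1,n}⁻¹)·Δ_{i,n}`
for all `i ≥ 1`, `n ∈ ℤ` (with the convention `Δ_{0,n}⁻¹ = 0`). -/
theorem stmt10 {D : Type*} [DivisionRing D] (R : ℤ → D)
    (hgen : ∀ k : ℕ, ∀ ρ γ : Fin (k + 1) → ℤ,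
      Function.Injective ρ → Function.Injective γ →
      ∀ p q : Fin (k + 1),
        quasiDet (k + 1) (Matrix.of fun a b => R (-(ρ a) - γ b)) p q ≠ 0) :
    ∀ i : ℕ, 1 ≤ i → ∀ n : ℤ,
      Delta R (i + 1) n =
        Delta R i (n + 1) -
          Delta R i n * ((Delta R i (n - 1))⁻¹ - (Delta R (i - 1) n)⁻¹) * Delta R i n := by
  have hR : QuasiGeneric (hankel R) := hgen
  intro i hi n
  rcases i with _ | _ | j
  · omega
  · exact Delta_two R n
  · exact Delta_add_three hR j n

end Stmt10
end

section
/- Let K be a field, r ≥ 1, and let T_{i,j,k} ∈ K for 0 ≤ i ≤ r+1 and j, k ∈ ℤ be nonzero elements with T_{0,j,k} = T_{r+1,j,k} = 1, satisfying the A_r T-system T_{i,j,k+1}·T_{i,j,k−1} = T_{i,j+1,k}·T_{i,j−1,k} + T_{i+1,j,k}·T_{i−1,j,k} for 1 ≤ i ≤ r and j, k ∈ ℤ. Let V be the K-vector space with basis (e_s)_{s∈ℤ}, and for 0 ≤ i ≤ r+1 and k ∈ ℤ define linear maps 𝐓_{i,k}, S_{i,k} : V → V by 𝐓_{i,k}·e_{j+k+i}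 = T_{i,j,k}·e_{j−k−i} and S_{i,k}·e_{j−k−i} = T_{i,j,k}⁻¹·e_{j+k+i} for all j ∈ ℤ (so S_{i,k} is a two-sided inverse of 𝐓_{i,k}). Then for all 1 ≤ i ≤ r and k ∈ ℤ, the identity 𝐓_{i,k+1} ∘ S_{i,k} ∘ 𝐓_{i,k−1} = 𝐓_{i,k} + 𝐓_{i+1,k} ∘ S_{i,k} ∘ 𝐓_{i−1,k} holds as an equality of linear endomorphisms of V. -/
/-- Proposition 4.1 of Di Francesco–Kedem: the `A_r` `T`-system is obtained as matrix
elements of a noncommutative `Q`-system. Given a solution `T_{i,j,k}` of the `A_r`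
`T`-system with nonzero entries and `T_{0,j,k} = T_{r+1,j,k} = 1`, and linear operators
`𝐓_{i,k}, S_{i,k}` on `V = ℤ →₀ K` defined on the basis by
`𝐓_{i,k}·e_{j+k+i} = T_{i,j,k}·e_{j-k-i}` and `S_{i,k}·e_{j-k-i} = T_{i,j,k}⁻¹·e_{j+k+i}`
(so `S_{i,k}` is the two-sided inverse of `𝐓_{i,k}`), one has
`𝐓_{i,k+1} ∘ S_{i,k} ∘ 𝐓_{i,k-1} = 𝐓_{i,k} + 𝐓_{i+1,k} ∘ S_{i,k} ∘ 𝐓_{i-1,k}`. -/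
theorem stmt11 {K : Type*} [Field K] (r : ℕ) (hr : 1 ≤ r)
    (T : ℕ → ℤ → ℤ → K)
    (hTnz : ∀ i : ℕ, i ≤ r + 1 → ∀ j k : ℤ, T i j k ≠ 0)
    (hT0 : ∀ j k : ℤ, T 0 j k = 1)
    (hTr : ∀ j k : ℤ, T (r + 1) j k = 1)
    (hTsys : ∀ i : ℕ, 1 ≤ i → i ≤ r → ∀ j k : ℤ,
      T i j (k + 1) * T i j (k - 1) =
        T i (j + 1) k * T i (j - 1) k + T (i + 1) j k * T (i - 1) j k)
    (Top Sop : ℕ → ℤ → (ℤ →₀ K) →ₗ[K] (ℤ →₀ K))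
    (hTop : ∀ i : ℕ, i ≤ r + 1 → ∀ k j : ℤ,
      Top i k (Finsupp.single (j + k + (i : ℤ)) (1 : K)) =
        T i j k • Finsupp.single (j - k - (i : ℤ)) (1 : K))
    (hSop : ∀ i : ℕ, i ≤ r + 1 → ∀ k j : ℤ,
      Sop i k (Finsupp.single (j - k - (i : ℤ)) (1 : K)) =
        (T i j k)⁻¹ • Finsupp.single (j + k + (i : ℤ)) (1 : K)) :
    ∀ i : ℕ, 1 ≤ i → i ≤ r → ∀ k : ℤ,
      Top i (k + 1) ∘ₗ Sop i k ∘ₗ Top i (k - 1) =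
        Top i k + Top (i + 1) k ∘ₗ Sop i k ∘ₗ Top (i - 1) k := by

  intro i hi hir k
  have hi1 : i ≤ r + 1 := by omega
  have hi2 : i + 1 ≤ r + 1 := by omega
  have hi3 : i - 1 ≤ r + 1 := by omega
  have hcast : ((i - 1 : ℕ) : ℤ) = (i : ℤ) - 1 := by
    omega
  apply Finsupp.lhom_ext'
  intro s
  apply LinearMap.ext_ring
  simp only [LinearMap.coe_comp, Function.comp_apply, Finsupp.lsingle_apply,
    LinearMap.add_apply]
  obtain ⟨j, rfl⟩ : ∃ j : ℤ, s = j + (k - 1) + (i : ℤ) := ⟨s - (k - 1) - i, by ring⟩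
  -- LHS
  have e1 : Top i (k - 1) (Finsupp.single (j + (k - 1) + (i : ℤ)) (1 : K)) =
      T i j (k - 1) • Finsupp.single (j - (k - 1) - (i : ℤ)) (1 : K) :=
    hTop i hi1 (k - 1) j
  have e2 : Sop i k (Finsupp.single (j - (k - 1) - (i : ℤ)) (1 : K)) =
      (T i (j + 1) k)⁻¹ • Finsupp.single (j + 1 + k + (i : ℤ)) (1 : K) := by
    have h : j - (k - 1) - (i : ℤ) = (j + 1) - k - (i : ℤ) := by ring
    rw [h]; exact hSop i hi1 k (j + 1)
  have e3 : Top i (k + 1) (Finsupp.single (j + 1 + k + (i : ℤ)) (1 : K)) =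
      T i j (k + 1) • Finsupp.single (j - (k + 1) - (i : ℤ)) (1 : K) := by
    have h : j + 1 + k + (i : ℤ) = j + (k + 1) + (i : ℤ) := by ring
    rw [h]; exact hTop i hi1 (k + 1) j
  -- RHS first term
  have e4 : Top i k (Finsupp.single (j + (k - 1) + (i : ℤ)) (1 : K)) =
      T i (j - 1) k • Finsupp.single ((j - 1) - k - (i : ℤ)) (1 : K) := by
    have h : j + (k - 1) + (i : ℤ) = (j - 1) + k + (i : ℤ) := by ring
    rw [h]; exact hTop i hi1 k (j - 1)
  -- RHS second term
  have e5 : Top (i - 1) k (Finsupp.single (j + (k - 1) + (i : ℤ)) (1 : K)) =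
      T (i - 1) j k • Finsupp.single (j - k - ((i - 1 : ℕ) : ℤ)) (1 : K) := by
    have h : j + (k - 1) + (i : ℤ) = j + k + ((i - 1 : ℕ) : ℤ) := by rw [hcast]; ring
    rw [h]; exact hTop (i - 1) hi3 k j
  have e6 : Sop i k (Finsupp.single (j - k - ((i - 1 : ℕ) : ℤ)) (1 : K)) =
      (T i (j + 1) k)⁻¹ • Finsupp.single (j + 1 + k + (i : ℤ)) (1 : K) := by
    have h : j - k - ((i - 1 : ℕ) : ℤ) = (j + 1) - k - (i : ℤ) := by rw [hcast]; ring
    rw [h]; exact hSop i hi1 k (j + 1)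
  have e7 : Top (i + 1) k (Finsupp.single (j + 1 + k + (i : ℤ)) (1 : K)) =
      T (i + 1) j k • Finsupp.single (j - k - ((i + 1 : ℕ) : ℤ)) (1 : K) := by
    have h : j + 1 + k + (i : ℤ) = j + k + ((i + 1 : ℕ) : ℤ) := by push_cast; ring
    rw [h]; exact hTop (i + 1) hi2 k j
  rw [e1, map_smul, e2, smul_smul, map_smul, e3, smul_smul,
    e4, e5, map_smul, e6, smul_smul, map_smul, e7, smul_smul]
  have hidx1 : j - (k + 1) - (i : ℤ) = j - k - (i : ℤ) - 1 := by ring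
  have hidx2 : (j - 1) - k - (i : ℤ) = j - k - (i : ℤ) - 1 := by ring
  have hidx3 : j - k - ((i + 1 : ℕ) : ℤ) = j - k - (i : ℤ) - 1 := by push_cast; ring
  rw [hidx1, hidx2, hidx3, ← add_smul]
  congr 1
  have hsys := hTsys i hi hir j k
  have h1 : T i (j + 1) k ≠ 0 := hTnz i hi1 (j + 1) k
  field_simp
  linear_combination hsys
end

section
/- Let A be a ring with 1, r ≥ 1, q an invertible central element of A, and R_{i,k} invertible elements of A for 0 ≤ i ≤ r+1 and k ∈ ℤ, satisfying R_{i,k}·R_{j,k} = R_{j,k}·R_{i,k} for all i, j, k, and R_{i,k}·R_{i,k+1} = q^{i(r+1−i)}·R_{i,k+1}·R_{i,k} for all 0 ≤ i ≤ r+1 and k ∈ ℤ. Then for each 1 ≤ i ≤ r and k ∈ ℤ, the relation R_{i,k+1}·R_{i,k}⁻¹·R_{i,k−1} = R_{i,k} + R_{i+1,k}·R_{i,k}⁻¹·R_{i−1,k} holds if and only if q^{i(r+1−i)}·R_{i,k+1}·R_{i,k−1} = R_{i,k}² + R_{i+1,k}·R_{i−1,k} holds. -/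
/-- Lemma 5.2 of Di Francesco–Kedem: equivalence of the two forms of the `A_r` quantum
`Q`-system. Given invertible, within-time commuting elements `R_{i,k}` that `q`-commute
as `R_{i,k}·R_{i,k+1} = q^{i(r+1-i)}·R_{i,k+1}·R_{i,k}` with `q` invertible and central,
the relation `R_{i,k+1}·R_{i,k}⁻¹·R_{i,k-1} = R_{i,k} + R_{i+1,k}·R_{i,k}⁻¹·R_{i-1,k}`
holds iff `q^{i(r+1-i)}·R_{i,k+1}·R_{i,k-1} = R_{i,k}² + R_{i+1,k}·R_{i-1,k}` holds. -/
theorem stmt13 {A : Type*} [Ring A] (r : ℕ) (hr : 1 ≤ r) (q : Aˣ)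
    (hqc : ∀ a : A, (q : A) * a = a * (q : A))
    (R : ℕ → ℤ → Aˣ)
    (hcomm : ∀ i j : ℕ, i ≤ r + 1 → j ≤ r + 1 → ∀ k : ℤ,
      (R i k : A) * (R j k : A) = (R j k : A) * (R i k : A))
    (hqcomm : ∀ i : ℕ, i ≤ r + 1 → ∀ k : ℤ,
      (R i k : A) * (R i (k + 1) : A) =
        (q : A) ^ (i * (r + 1 - i)) * ((R i (k + 1) : A) * (R i k : A))) :
    ∀ i : ℕ, 1 ≤ i → i ≤ r → ∀ k : ℤ,
      ((R i (k + 1) : A) * ((R i k)⁻¹ : Aˣ) * (R i (k - 1) : A) =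
          (R i k : A) + (R (i + 1) k : A) * ((R i k)⁻¹ : Aˣ) * (R (i - 1) k : A) ↔
        (q : A) ^ (i * (r + 1 - i)) * ((R i (k + 1) : A) * (R i (k - 1) : A)) =
          (R i k : A) ^ 2 + (R (i + 1) k : A) * (R (i - 1) k : A)) := by
  intro i h1 hir k
  have hi1 : i ≤ r + 1 := by omega
  set n := i * (r + 1 - i) with hn
  have hQ : ∀ x : A, (q : A) ^ n * x = x * (q : A) ^ n := fun x =>
    (Commute.pow_left (hqc x) n)
  have key : (R i (k - 1) : A) * (R i k : A) =
      (q : A) ^ n * ((R i k : A) * (R i (k - 1) : A)) := by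
    have := hqcomm i hi1 (k - 1)
    simpa using this
  have hc1 : (R (i - 1) k : A) * (R i k : A) = (R i k : A) * (R (i - 1) k : A) :=
    hcomm _ _ (by omega) hi1 k
  -- abbreviations
  set a := (R i (k + 1) : A)
  set b := (R i k : A) with hb
  set c := (R i (k - 1) : A)
  set p := (R (i + 1) k : A)
  set m := (R (i - 1) k : A)
  have hbinv : ((R i k)⁻¹ : Aˣ) * b = 1 := Units.inv_mul _
  have hmove : ∀ x y : A, x * ((q : A) ^ n * y) = (q : A) ^ n * (x * y) := fun x y => by
    rw [← mul_assoc, ← hQ, mul_assoc]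
  have hL : a * ((R i k)⁻¹ : Aˣ) * c * b = (q : A) ^ n * (a * c) := by
    calc a * ((R i k)⁻¹ : Aˣ) * c * b
        = a * (((R i k)⁻¹ : Aˣ) * (c * b)) := by rw [mul_assoc, mul_assoc]
      _ = a * (((R i k)⁻¹ : Aˣ) * ((q : A) ^ n * (b * c))) := by rw [key]
      _ = a * ((q : A) ^ n * (((R i k)⁻¹ : Aˣ) * (b * c))) := by rw [hmove]
      _ = (q : A) ^ n * (a * (((R i k)⁻¹ : Aˣ) * (b * c))) := by rw [hmove]
      _ = (q : A) ^ n * (a * c) := by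
            rw [← mul_assoc (((R i k)⁻¹ : Aˣ) : A) b c, hbinv, one_mul]
  have hR : (b + p * ((R i k)⁻¹ : Aˣ) * m) * b = b ^ 2 + p * m := by
    rw [add_mul, ← sq]
    congr 1
    calc p * ((R i k)⁻¹ : Aˣ) * m * b
        = p * (((R i k)⁻¹ : Aˣ) * (m * b)) := by rw [mul_assoc, mul_assoc]
      _ = p * (((R i k)⁻¹ : Aˣ) * b * m) := by rw [hc1, mul_assoc]
      _ = p * m := by rw [hbinv, one_mul]
  constructor
  · intro h
    rw [← hL, h, hR]
  · intro h
    have : a * ((R i k)⁻¹ : Aˣ) * c * b = (b + p * ((R i k)⁻¹ : Aˣ) * m) * b := by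
      rw [hL, hR, h]
    exact (Units.mul_left_inj (R i k)).mp this
end

section
/- Let D be a division ring, r ≥ 2, q a nonzero central element of D, and R_{i,n} ∈ D nonzero elements for 0 ≤ i ≤ 3 and n ∈ ℤ (with 3 ≤ r+1), satisfying: R_{0,n} = 1; R_{i,n}·R_{j,n} = R_{j,n}·R_{i,n} for 0 ≤ i, j ≤ 3; R_{i,n}·R_{j,n+1} = q^{λ_{ij}}·R_{j,n+1}·R_{i,n} for 0 ≤ i, j ≤ 3, where λ_{ij} = min(i,j)·(r+1−max(i,j)); and the quantum Q-system q^{λ_{ii}}·R_{i,n+1}·R_{i,n−1} = R_{i,n}² + R_{i+1,n}·R_{i−1,n} for i = 1, 2 and all n ∈ ℤ. Then, writing R_n := R_{1,n}, one has for all n ∈ ℤ: R_{2,n} = q^r·R_{n+1}·R_{n−1} − R_n², and R_{3,n} = q^{3r−1}·R_{n+2}·R_n·R_{n−2} − q^{2r−1}·(R_{n+2}·R_{n−1}² + R_{n+1}²·R_{n−2}) + q^{r−1}·(q^{r+1} + 1)·R_{n+1}·R_n·R_{n−1} − R_n³. -/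
section
variable {D : Type*} [DivisionRing D]

set_option maxHeartbeats 1600000 in
theorem qw_aux (q : D) (hq : q ≠ 0) (hqc : ∀ x : D, q * x = x * q) (s : ℕ)
    (a b c d e S T U R3 : D)
    (hc : c ≠ 0) (hd : d ≠ 0) (he : e ≠ 0)
    (hcb : c * b = q ^ (s + 2) * (b * c))
    (hdc : d * c = q ^ (s + 2) * (c * d))
    (hed : e * d = q ^ (s + 2) * (d * e))
    (hS : S = q ^ (s + 2) * (a * c) - b ^ 2)
    (hT : T = q ^ (s + 2) * (c * e) - d ^ 2)
    (hU : U = q ^ (s + 2) * (b * d) - c ^ 2)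
    (heT : e * T = q ^ (s + 1) * (T * e))
    (hdU : d * U = q ^ (s + 1) * (U * d))
    (hQ2 : R3 * c = q ^ (2 * s + 2) * (S * T) - U ^ 2) :
    R3 = q ^ (3 * s + 5) * (a * c * e) - q ^ (2 * s + 3) * (a * d ^ 2 + b ^ 2 * e) +
      q ^ (s + 1) * (q ^ (s + 3) + 1) * (b * c * d) - c ^ 3 := by
  -- toolbox
  have Cq : ∀ x y : D, x * (q * y) = q * (x * y) := fun x y => by
    rw [← mul_assoc, ← hqc, mul_assoc]
  have hk : ∀ (k : ℕ) (x : D), q ^ k * x = x * q ^ k := fun k x =>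
    (Commute.pow_left (hqc x) k).eq
  have Ck : ∀ (k : ℕ) (x y : D), x * (q ^ k * y) = q ^ k * (x * y) := fun k x y => by
    rw [← mul_assoc, ← hk, mul_assoc]
  have Cs : ∀ (k : ℕ) (x y : D), x * ((q ^ k - 1) * y) = (q ^ k - 1) * (x * y) := fun k x y => by
    rw [sub_mul, one_mul, mul_sub, Ck, sub_mul, one_mul]
  have CM : ∀ (j k l : ℕ), j + k = l → ∀ x : D, q ^ j * (q ^ k * x) = q ^ l * x := by
    intro j k l h x; rw [← mul_assoc, ← pow_add, h]
  have CQ : ∀ (k l : ℕ), k + 1 = l → ∀ x : D, q ^ k * (q * x) = q ^ l * x := by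
    intro k l h x; rw [← mul_assoc, ← pow_succ, h]
  have hT' : q ^ (s + 2) * (c * e) = d ^ 2 + T := by rw [hT]; noncomm_ring
  have hU' : q ^ (s + 2) * (b * d) = c ^ 2 + U := by rw [hU]; noncomm_ring
  have hdc2 : ∀ x : D, d * (c * x) = q ^ (s + 2) * (c * (d * x)) := fun x => by
    rw [← mul_assoc, hdc, mul_assoc, mul_assoc]
  -- the two distance-2 exchange relations
  have hec : q * (e * c) = q ^ (s + 2) * (c * e) + (q ^ (s + 3) - 1) * (d * d) := by
    have h2 : e * d ^ 2 = q ^ (2 * s + 4) * (d * (d * e)) := by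
      calc e * d ^ 2 = (e * d) * d := by noncomm_ring
        _ = (q ^ (s + 2) * (d * e)) * d := by rw [hed]
        _ = q ^ (s + 2) * (d * (e * d)) := by rw [mul_assoc, mul_assoc]
        _ = q ^ (s + 2) * (d * (q ^ (s + 2) * (d * e))) := by rw [hed]
        _ = q ^ (s + 2) * (q ^ (s + 2) * (d * (d * e))) := by rw [Ck]
        _ = q ^ (2 * s + 4) * (d * (d * e)) := CM _ _ _ (by omega) _
    have step1 : (q ^ (s + 2) * (e * c)) * e = (q ^ (2 * s + 4) * (d * d) + q ^ (s + 1) * T) * e := by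
      calc (q ^ (s + 2) * (e * c)) * e = q ^ (s + 2) * (e * (c * e)) := by
            rw [mul_assoc, mul_assoc]
        _ = e * (q ^ (s + 2) * (c * e)) := (Ck _ _ _).symm
        _ = e * (d ^ 2 + T) := by rw [hT']
        _ = e * d ^ 2 + e * T := by rw [mul_add]
        _ = q ^ (2 * s + 4) * (d * (d * e)) + q ^ (s + 1) * (T * e) := by rw [h2, heT]
        _ = (q ^ (2 * s + 4) * (d * d) + q ^ (s + 1) * T) * e := by noncomm_ring
    have step2 : q ^ (s + 2) * (e * c) = q ^ (2 * s + 4) * (d * d) + q ^ (s + 1) * T :=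
      mul_right_cancel₀ he step1
    have h3 : q ^ (s + 1) * (q * (e * c)) =
        q ^ (s + 1) * (q ^ (s + 2) * (c * e) + (q ^ (s + 3) - 1) * (d * d)) := by
      calc q ^ (s + 1) * (q * (e * c)) = q ^ (s + 2) * (e * c) := CQ _ _ (by omega) _
        _ = q ^ (2 * s + 4) * (d * d) + q ^ (s + 1) * T := step2
        _ = q ^ (2 * s + 4) * (d * d) + q ^ (s + 1) * (q ^ (s + 2) * (c * e) - d ^ 2) := by rw [hT]
        _ = q ^ (s + 1) * (q ^ (s + 2) * (c * e) + (q ^ (s + 3) - 1) * (d * d)) := by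
            rw [mul_add, CM (s + 1) (s + 2) (2 * s + 3) (by omega), sub_mul, one_mul, mul_sub,
              CM (s + 1) (s + 2) (2 * s + 3) (by omega), mul_sub,
              CM (s + 1) (s + 3) (2 * s + 4) (by omega)]
            noncomm_ring
    exact mul_left_cancel₀ (pow_ne_zero (s + 1) hq) h3
  have hdb : q * (d * b) = q ^ (s + 2) * (b * d) + (q ^ (s + 3) - 1) * (c * c) := by
    have h2 : d * c ^ 2 = q ^ (2 * s + 4) * (c * (c * d)) := by
      calc d * c ^ 2 = (d * c) * c := by noncomm_ring
        _ = (q ^ (s + 2) * (c * d)) * c := by rw [hdc]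
        _ = q ^ (s + 2) * (c * (d * c)) := by rw [mul_assoc, mul_assoc]
        _ = q ^ (s + 2) * (c * (q ^ (s + 2) * (c * d))) := by rw [hdc]
        _ = q ^ (s + 2) * (q ^ (s + 2) * (c * (c * d))) := by rw [Ck]
        _ = q ^ (2 * s + 4) * (c * (c * d)) := CM _ _ _ (by omega) _
    have step1 : (q ^ (s + 2) * (d * b)) * d = (q ^ (2 * s + 4) * (c * c) + q ^ (s + 1) * U) * d := by
      calc (q ^ (s + 2) * (d * b)) * d = q ^ (s + 2) * (d * (b * d)) := by
            rw [mul_assoc, mul_assoc]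
        _ = d * (q ^ (s + 2) * (b * d)) := (Ck _ _ _).symm
        _ = d * (c ^ 2 + U) := by rw [hU']
        _ = d * c ^ 2 + d * U := by rw [mul_add]
        _ = q ^ (2 * s + 4) * (c * (c * d)) + q ^ (s + 1) * (U * d) := by rw [h2, hdU]
        _ = (q ^ (2 * s + 4) * (c * c) + q ^ (s + 1) * U) * d := by noncomm_ring
    have step2 : q ^ (s + 2) * (d * b) = q ^ (2 * s + 4) * (c * c) + q ^ (s + 1) * U :=
      mul_right_cancel₀ hd step1
    have h3 : q ^ (s + 1) * (q * (d * b)) =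
        q ^ (s + 1) * (q ^ (s + 2) * (b * d) + (q ^ (s + 3) - 1) * (c * c)) := by
      calc q ^ (s + 1) * (q * (d * b)) = q ^ (s + 2) * (d * b) := CQ _ _ (by omega) _
        _ = q ^ (2 * s + 4) * (c * c) + q ^ (s + 1) * U := step2
        _ = q ^ (2 * s + 4) * (c * c) + q ^ (s + 1) * (q ^ (s + 2) * (b * d) - c ^ 2) := by rw [hU]
        _ = q ^ (s + 1) * (q ^ (s + 2) * (b * d) + (q ^ (s + 3) - 1) * (c * c)) := by
            rw [mul_add, CM (s + 1) (s + 2) (2 * s + 3) (by omega), sub_mul, one_mul, mul_sub,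
              CM (s + 1) (s + 2) (2 * s + 3) (by omega), mul_sub,
              CM (s + 1) (s + 3) (2 * s + 4) (by omega)]
            noncomm_ring
    exact mul_left_cancel₀ (pow_ne_zero (s + 1) hq) h3
  have hec2 : ∀ x : D, q * (x * (e * c)) =
      q ^ (s + 2) * (x * (c * e)) + (q ^ (s + 3) - 1) * (x * (d * d)) := fun x => by
    rw [← Cq, hec, mul_add, Ck, Cs]
  have hdb2 : ∀ x : D, q * (x * (d * b)) =
      q ^ (s + 2) * (x * (b * d)) + (q ^ (s + 3) - 1) * (x * (c * c)) := fun x => by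
    rw [← Cq, hdb, mul_add, Ck, Cs]
  -- the six term computations
  have T1 : q ^ 2 * (q ^ (3 * s + 5) * (a * c * e) * c) =
      q ^ (4 * s + 8) * (a * (c * (c * e))) +
        (q ^ (4 * s + 9) - q ^ (3 * s + 6)) * (a * (c * (d * d))) := by
    have h1 : q ^ 2 * (q ^ (3 * s + 5) * (a * c * e) * c) =
        q ^ (3 * s + 6) * (q * ((a * c) * (e * c))) := by
      rw [mul_assoc (q ^ (3 * s + 5)) (a * c * e) c, mul_assoc (a * c) e c,
        CM 2 (3 * s + 5) (3 * s + 7) (by omega), CQ (3 * s + 6) (3 * s + 7) (by omega)]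
    rw [h1, hec2 (a * c), mul_add, CM (3 * s + 6) (s + 2) (4 * s + 8) (by omega),
      sub_mul, one_mul, mul_sub, CM (3 * s + 6) (s + 3) (4 * s + 9) (by omega)]
    noncomm_ring
  have T2 : q ^ 2 * (q ^ (2 * s + 3) * (a * d ^ 2 + b ^ 2 * e) * c) =
      q ^ (4 * s + 9) * (a * (c * (d * d))) + q ^ (3 * s + 6) * (b * (b * (c * e))) +
        (q ^ (3 * s + 7) - q ^ (2 * s + 4)) * (b * (b * (d * d))) := by
    have h1 : q ^ 2 * (q ^ (2 * s + 3) * (a * d ^ 2 + b ^ 2 * e) * c) =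
        q ^ (2 * s + 5) * ((a * d ^ 2) * c) + q ^ (2 * s + 5) * ((b ^ 2 * e) * c) := by
      rw [mul_assoc (q ^ (2 * s + 3)), CM 2 (2 * s + 3) (2 * s + 5) (by omega)]
      noncomm_ring
    have p1 : q ^ (2 * s + 5) * ((a * d ^ 2) * c) = q ^ (4 * s + 9) * (a * (c * (d * d))) := by
      calc q ^ (2 * s + 5) * ((a * d ^ 2) * c) = q ^ (2 * s + 5) * (a * (d * (d * c))) := by
            noncomm_ring
        _ = q ^ (2 * s + 5) * (a * (d * (q ^ (s + 2) * (c * d)))) := by rw [hdc]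
        _ = q ^ (2 * s + 5) * (a * (q ^ (s + 2) * (d * (c * d)))) := by rw [Ck]
        _ = q ^ (2 * s + 5) * (a * (q ^ (s + 2) * (q ^ (s + 2) * (c * (d * d))))) := by rw [hdc2]
        _ = q ^ (4 * s + 9) * (a * (c * (d * d))) := by
            rw [CM (s + 2) (s + 2) (2 * s + 4) (by omega), Ck,
              CM (2 * s + 5) (2 * s + 4) (4 * s + 9) (by omega)]
    have p2 : q ^ (2 * s + 5) * ((b ^ 2 * e) * c) =
        q ^ (3 * s + 6) * (b * (b * (c * e))) +
          (q ^ (3 * s + 7) - q ^ (2 * s + 4)) * (b * (b * (d * d))) := by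
      have h2 : (b ^ 2 * e) * c = (b * b) * (e * c) := by noncomm_ring
      rw [h2, ← CQ (2 * s + 4) (2 * s + 5) (by omega), hec2 (b * b), mul_add,
        CM (2 * s + 4) (s + 2) (3 * s + 6) (by omega), sub_mul, one_mul, mul_sub,
        CM (2 * s + 4) (s + 3) (3 * s + 7) (by omega)]
      noncomm_ring
    rw [h1, p1, p2]; noncomm_ring
  have T3 : q ^ 2 * (q ^ (s + 1) * (q ^ (s + 3) + 1) * (b * c * d) * c) =
      (q ^ (3 * s + 8) + q ^ (2 * s + 5)) * (b * (c * (c * d))) := by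
    have h1 : q ^ 2 * (q ^ (s + 1) * (q ^ (s + 3) + 1) * (b * c * d) * c) =
        q ^ 2 * (q ^ (s + 1) * ((q ^ (s + 3) + 1) * ((b * c) * (d * c)))) := by
      rw [mul_assoc (q ^ (s + 1)) (q ^ (s + 3) + 1), mul_assoc (q ^ (s + 1)),
        mul_assoc (q ^ (s + 3) + 1), mul_assoc (b * c) d c]
    rw [h1, hdc, Ck (s + 2) (b * c) (c * d), add_mul, one_mul, CM (s + 3) (s + 2) (2 * s + 5) (by omega), mul_add,
      CM (s + 1) (2 * s + 5) (3 * s + 6) (by omega), CM (s + 1) (s + 2) (2 * s + 3) (by omega),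
      mul_add, CM 2 (3 * s + 6) (3 * s + 8) (by omega), CM 2 (2 * s + 3) (2 * s + 5) (by omega)]
    noncomm_ring
  have T5 : q ^ 2 * (q ^ (2 * s + 2) * (S * T)) =
      q ^ (4 * s + 8) * (a * (c * (c * e))) - q ^ (3 * s + 6) * (a * (c * (d * d))) -
        q ^ (3 * s + 6) * (b * (b * (c * e))) + q ^ (2 * s + 4) * (b * (b * (d * d))) := by
    have hst : S * T = q ^ (2 * s + 4) * (a * (c * (c * e))) - q ^ (s + 2) * (a * (c * (d * d))) -
        q ^ (s + 2) * (b * (b * (c * e))) + b * (b * (d * d)) := by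
      have e1 : (q ^ (s + 2) * (a * c)) * (q ^ (s + 2) * (c * e)) =
          q ^ (2 * s + 4) * ((a * c) * (c * e)) := by
        rw [mul_assoc, Ck, CM (s + 2) (s + 2) (2 * s + 4) (by omega)]
      have e3 : b ^ 2 * (q ^ (s + 2) * (c * e)) = q ^ (s + 2) * (b ^ 2 * (c * e)) := Ck _ _ _
      calc S * T = (q ^ (s + 2) * (a * c)) * (q ^ (s + 2) * (c * e)) -
            (q ^ (s + 2) * (a * c)) * d ^ 2 - b ^ 2 * (q ^ (s + 2) * (c * e)) + b ^ 2 * d ^ 2 := by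
            rw [hS, hT]; noncomm_ring
        _ = _ := by rw [e1, e3, mul_assoc (q ^ (s + 2)) (a * c) (d ^ 2)]; noncomm_ring
    rw [hst, CM 2 (2 * s + 2) (2 * s + 4) (by omega), mul_add, mul_sub, mul_sub,
      CM (2 * s + 4) (2 * s + 4) (4 * s + 8) (by omega),
      CM (2 * s + 4) (s + 2) (3 * s + 6) (by omega),
      CM (2 * s + 4) (s + 2) (3 * s + 6) (by omega)]
  have T6 : q ^ 2 * U ^ 2 = q ^ (3 * s + 7) * (b * (b * (d * d))) -
      (q ^ (3 * s + 8) + q ^ (2 * s + 5)) * (b * (c * (c * d))) + q ^ 2 * (c * (c * (c * c))) := by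
    have p1 : q ^ 2 * ((q ^ (s + 2) * (b * d)) * (q ^ (s + 2) * (b * d))) =
        q ^ (3 * s + 7) * (b * (b * (d * d))) +
          (q ^ (3 * s + 8) - q ^ (2 * s + 5)) * (b * (c * (c * d))) := by
      calc q ^ 2 * ((q ^ (s + 2) * (b * d)) * (q ^ (s + 2) * (b * d)))
          = q ^ (2 * s + 5) * (q * (b * ((d * b) * d))) := by
            rw [mul_assoc (q ^ (s + 2)) (b * d), Ck (s + 2) (b * d) (b * d),
              CM (s + 2) (s + 2) (2 * s + 4) (by omega),
              CM 2 (2 * s + 4) (2 * s + 6) (by omega), ← CQ (2 * s + 5) (2 * s + 6) (by omega)]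
            have h : (b * d) * (b * d) = b * ((d * b) * d) := by noncomm_ring
            rw [h]
        _ = q ^ (2 * s + 5) * (b * ((q * (d * b)) * d)) := by
            rw [← Cq, ← mul_assoc q (d * b) d]
        _ = q ^ (2 * s + 5) * (b * ((q ^ (s + 2) * (b * d) + (q ^ (s + 3) - 1) * (c * c)) * d)) := by
            rw [hdb]
        _ = q ^ (3 * s + 7) * (b * (b * (d * d))) +
              (q ^ (3 * s + 8) - q ^ (2 * s + 5)) * (b * (c * (c * d))) := by
            rw [add_mul, mul_add, mul_add, mul_assoc (q ^ (s + 2)) (b * d) d, Ck,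
              CM (2 * s + 5) (s + 2) (3 * s + 7) (by omega),
              mul_assoc (q ^ (s + 3) - 1) (c * c) d, Cs, sub_mul, one_mul, mul_sub,
              CM (2 * s + 5) (s + 3) (3 * s + 8) (by omega)]
            noncomm_ring
    have p2 : q ^ 2 * ((q ^ (s + 2) * (b * d)) * c ^ 2) = q ^ (3 * s + 8) * (b * (c * (c * d))) := by
      calc q ^ 2 * ((q ^ (s + 2) * (b * d)) * c ^ 2) = q ^ (s + 4) * (b * (d * (c * c))) := by
            rw [mul_assoc (q ^ (s + 2)) (b * d), CM 2 (s + 2) (s + 4) (by omega)]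
            noncomm_ring
        _ = q ^ (s + 4) * (b * (q ^ (s + 2) * (c * (d * c)))) := by rw [hdc2]
        _ = q ^ (s + 4) * (b * (q ^ (s + 2) * (c * (q ^ (s + 2) * (c * d))))) := by rw [hdc]
        _ = q ^ (3 * s + 8) * (b * (c * (c * d))) := by
            rw [Ck (s + 2) c (c * d), CM (s + 2) (s + 2) (2 * s + 4) (by omega),
              Ck (2 * s + 4) b (c * (c * d)), CM (s + 4) (2 * s + 4) (3 * s + 8) (by omega)]
    have p3 : q ^ 2 * (c ^ 2 * (q ^ (s + 2) * (b * d))) = q ^ (3 * s + 8) * (b * (c * (c * d))) := by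
      calc q ^ 2 * (c ^ 2 * (q ^ (s + 2) * (b * d))) = q ^ (s + 4) * (c * ((c * b) * d)) := by
            rw [Ck, CM 2 (s + 2) (s + 4) (by omega)]
            noncomm_ring
        _ = q ^ (s + 4) * (c * ((q ^ (s + 2) * (b * c)) * d)) := by rw [hcb]
        _ = q ^ (2 * s + 6) * ((c * b) * (c * d)) := by
            rw [mul_assoc (q ^ (s + 2)) (b * c) d, Ck, CM (s + 4) (s + 2) (2 * s + 6) (by omega)]
            noncomm_ring
        _ = q ^ (2 * s + 6) * (q ^ (s + 2) * ((b * c) * (c * d))) := by rw [hcb, mul_assoc]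
        _ = q ^ (3 * s + 8) * (b * (c * (c * d))) := by
            rw [CM (2 * s + 6) (s + 2) (3 * s + 8) (by omega)]
            noncomm_ring
    have hu2 : q ^ 2 * U ^ 2 = q ^ 2 * ((q ^ (s + 2) * (b * d)) * (q ^ (s + 2) * (b * d))) -
        q ^ 2 * ((q ^ (s + 2) * (b * d)) * c ^ 2) - q ^ 2 * (c ^ 2 * (q ^ (s + 2) * (b * d))) +
        q ^ 2 * (c ^ 2 * c ^ 2) := by
      rw [hU]; noncomm_ring
    rw [hu2, p1, p2, p3]; noncomm_ring
  -- assembly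
  have L : q ^ 2 * ((q ^ (3 * s + 5) * (a * c * e) - q ^ (2 * s + 3) * (a * d ^ 2 + b ^ 2 * e) +
      q ^ (s + 1) * (q ^ (s + 3) + 1) * (b * c * d) - c ^ 3) * c) =
      q ^ 2 * (q ^ (2 * s + 2) * (S * T) - U ^ 2) := by
    have split : q ^ 2 * ((q ^ (3 * s + 5) * (a * c * e) - q ^ (2 * s + 3) * (a * d ^ 2 + b ^ 2 * e) +
        q ^ (s + 1) * (q ^ (s + 3) + 1) * (b * c * d) - c ^ 3) * c) =
        q ^ 2 * (q ^ (3 * s + 5) * (a * c * e) * c) -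
        q ^ 2 * (q ^ (2 * s + 3) * (a * d ^ 2 + b ^ 2 * e) * c) +
        q ^ 2 * (q ^ (s + 1) * (q ^ (s + 3) + 1) * (b * c * d) * c) -
        q ^ 2 * (c * (c * (c * c))) := by noncomm_ring
    have split2 : q ^ 2 * (q ^ (2 * s + 2) * (S * T) - U ^ 2) =
        q ^ 2 * (q ^ (2 * s + 2) * (S * T)) - q ^ 2 * U ^ 2 := by noncomm_ring
    rw [split, split2, T1, T2, T3, T5, T6]
    noncomm_ring
  have key : (q ^ (3 * s + 5) * (a * c * e) - q ^ (2 * s + 3) * (a * d ^ 2 + b ^ 2 * e) +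
      q ^ (s + 1) * (q ^ (s + 3) + 1) * (b * c * d) - c ^ 3) * c =
      q ^ (2 * s + 2) * (S * T) - U ^ 2 :=
    mul_left_cancel₀ (pow_ne_zero 2 hq) L
  exact mul_right_cancel₀ hc (hQ2.trans key.symm)

end

/-- Remark 5.4 of Di Francesco–Kedem: explicit 'quantum Wronskian' expressions for the
solutions of the `A_r` quantum `Q`-system in terms of `R_n = R_{1,n}`, for `i = 2, 3`. -/
theorem stmt15 {D : Type*} [DivisionRing D] (r : ℕ) (hr : 2 ≤ r)
    (q : D) (hq : q ≠ 0) (hqc : ∀ a : D, q * a = a * q)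
    (R : ℕ → ℤ → D)
    (hRnz : ∀ i : ℕ, i ≤ 3 → ∀ n : ℤ, R i n ≠ 0)
    (hR0 : ∀ n : ℤ, R 0 n = 1)
    (hcomm : ∀ i j : ℕ, i ≤ 3 → j ≤ 3 → ∀ n : ℤ,
      R i n * R j n = R j n * R i n)
    (hqcomm : ∀ i j : ℕ, i ≤ 3 → j ≤ 3 → ∀ n : ℤ,
      R i n * R j (n + 1) =
        q ^ (min i j * (r + 1 - max i j)) * (R j (n + 1) * R i n))
    (hQ : ∀ i : ℕ, i = 1 ∨ i = 2 → ∀ n : ℤ,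
      q ^ (i * (r + 1 - i)) * (R i (n + 1) * R i (n - 1)) =
        R i n ^ 2 + R (i + 1) n * R (i - 1) n) :
    ∀ n : ℤ,
      R 2 n = q ^ r * (R 1 (n + 1) * R 1 (n - 1)) - R 1 n ^ 2 ∧
      R 3 n =
        q ^ (3 * r - 1) * (R 1 (n + 2) * R 1 n * R 1 (n - 2)) -
          q ^ (2 * r - 1) * (R 1 (n + 2) * R 1 (n - 1) ^ 2 + R 1 (n + 1) ^ 2 * R 1 (n - 2)) +
          q ^ (r - 1) * (q ^ (r + 1) + 1) * (R 1 (n + 1) * R 1 n * R 1 (n - 1)) -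
          R 1 n ^ 3 := by
  obtain ⟨s, rfl⟩ : ∃ s, r = s + 2 := ⟨r - 2, by omega⟩
  have h2 : ∀ m : ℤ, R 2 m = q ^ (s + 2) * (R 1 (m + 1) * R 1 (m - 1)) - R 1 m ^ 2 := by
    intro m
    have h := hQ 1 (Or.inl rfl) m
    rw [hR0, mul_one] at h
    have hx : 1 * (s + 2 + 1 - 1) = s + 2 := by omega
    rw [hx] at h
    exact eq_sub_of_add_eq' h.symm
  intro n
  refine ⟨h2 n, ?_⟩
  have e1 : n + 1 + 1 = n + 2 := by ring
  have e2 : n + 1 - 1 = n := by ring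
  have e3 : n - 1 + 1 = n := by ring
  have e4 : n - 1 - 1 = n - 2 := by ring
  have e5 : n - 2 + 1 = n - 1 := by ring
  have x1 : 3 * (s + 2) - 1 = 3 * s + 5 := by omega
  have x2 : 2 * (s + 2) - 1 = 2 * s + 3 := by omega
  have x3 : s + 2 - 1 = s + 1 := by omega
  have x4 : s + 2 + 1 = s + 3 := by omega
  rw [x1, x2, x3, x4]
  have y1 : min 1 1 * (s + 2 + 1 - max 1 1) = s + 2 := by simp
  have y2 : min 1 2 * (s + 2 + 1 - max 1 2) = s + 1 := by simp
  have hcb := hqcomm 1 1 (by norm_num) (by norm_num) n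
  have hdc := hqcomm 1 1 (by norm_num) (by norm_num) (n - 1)
  have hed := hqcomm 1 1 (by norm_num) (by norm_num) (n - 2)
  have heT := hqcomm 1 2 (by norm_num) (by norm_num) (n - 2)
  have hdU := hqcomm 1 2 (by norm_num) (by norm_num) (n - 1)
  rw [y1, e3] at hdc
  rw [y1, e5] at hed
  rw [y1] at hcb
  rw [y2, e5] at heT
  rw [y2, e3] at hdU
  have hQ2 := hQ 2 (Or.inr rfl) n
  have y3 : 2 * (s + 2 + 1 - 2) = 2 * s + 2 := by omega
  rw [y3] at hQ2
  have hQ2' : R 3 n * R 1 n = q ^ (2 * s + 2) * (R 2 (n + 1) * R 2 (n - 1)) - R 2 n ^ 2 :=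
    eq_sub_of_add_eq' hQ2.symm
  have hSS := h2 (n + 1); rw [e1, e2] at hSS
  have hTT := h2 (n - 1); rw [e3, e4] at hTT
  have hUU := h2 n
  exact qw_aux q hq hqc s (R 1 (n + 2)) (R 1 (n + 1)) (R 1 n) (R 1 (n - 1)) (R 1 (n - 2))
    (R 2 (n + 1)) (R 2 (n - 1)) (R 2 n) (R 3 n)
    (hRnz 1 (by norm_num) n) (hRnz 1 (by norm_num) (n - 1)) (hRnz 1 (by norm_num) (n - 2))
    hcb hdc hed hSS hTT hUU heT hdU hQ2'
end

section
/- Let D be a division ring, k ≥ 1 an integer, and u : ℤ → D a sequence of nonzero elements satisfying, for all n ∈ ℤ, u_{2n+2k+1}·u_{2n} = u_{2n+1}·u_{2n+2k} + 1 and u_{2n+1}·u_{2n+2k+2} = u_{2n+2k+1}·u_{2n+2} + 1. Then for all n ∈ ℤ and all i ∈ ℤ, the element u_n belongs to the subsemiring of D generated by the 2(2k+1) elements u_i, u_i⁻¹, u_{i+1}, u_{i+1}⁻¹, …, u_{i+2k}, u_{i+2k}⁻¹; i.e., u_n is a positive Laurent polynomial in any initial data (u_i, u_{i+1}, …, u_{i+2k}).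 -/
/-!
Write `x / y` for `x y⁻¹` at even positions and for `y⁻¹ x` at odd positions. The two
relations say exactly that the quotient `u_{n+2k} / u_n` grows by `(u_n u_{n+1})⁻¹`, resp.
`(u_{n+1} u_n)⁻¹`, from `n` to `n + 1`; adding the relations at `n` and `n + 2k` shows that
`(u_n + u_{n+4k}) / u_{n+2k}` does not depend on `n`. Evaluated at `0` this constant is
`T = z + z⁻¹ + s`, where `z = u_{2k} u_0⁻¹` and `s` is a sum of products of inverses of the
initial data. So along each residue class `a_j = u_{r+2kj}` with `r` even we have
`a_{j+2} = T a_{j+1} - a_j`, and the defect `a_{j+1} - z a_j` propagates as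
`a_{j+2} - z a_{j+1} = s a_{j+1} + z⁻¹ (a_{j+1} - z a_j)`: a positive expression once the
previous defect is, the first one being `(u_{r+2k} / u_r - z) u_r`. Odd `r` is the mirror image.
Other windows reduce to the window at `0` by an even shift, or by an odd shift followed by
passing to `Dᵐᵒᵖ`, which swaps the two relations; indices below the window are reached by the
reflection `n ↦ 2k - n`.
-/

open MulOpposite Finset

theorem Subsemiring.mem_of_chebyshev_recurrence_left {R : Type*} [Ring R] {S : Subsemiring R}
    {z w s : R} (hz : z ∈ S) (hw : w ∈ S) (hs : s ∈ S) (hwz : w * z = 1) {a : ℕ → R}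
    (ha : ∀ j, a j + a (j + 2) = (z + w + s) * a (j + 1))
    (h0 : a 0 ∈ S) (h1 : a 1 - z * a 0 ∈ S) (j : ℕ) : a j ∈ S := by
  suffices ∀ j, a j ∈ S ∧ a (j + 1) - z * a j ∈ S from (this j).1
  intro j
  induction j with
  | zero => exact ⟨h0, h1⟩
  | succ j ih =>
    obtain ⟨hj, hd⟩ := ih
    have hj1 : a (j + 1) ∈ S := by simpa using add_mem (mul_mem hz hj) hd
    have key : a (j + 2) - z * a (j + 1) = s * a (j + 1) + w * (a (j + 1) - z * a j) := by
      rw [eq_sub_of_add_eq' (ha j), mul_sub w, ← mul_assoc w, hwz, one_mul]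
      noncomm_ring
    refine ⟨hj1, ?_⟩
    rw [key]
    exact add_mem (mul_mem hs hj1) (mul_mem hw hd)

theorem Subsemiring.mem_of_chebyshev_recurrence_right {R : Type*} [Ring R] {S : Subsemiring R}
    {z w s : R} (hz : z ∈ S) (hw : w ∈ S) (hs : s ∈ S) (hzw : z * w = 1) {a : ℕ → R}
    (ha : ∀ j, a j + a (j + 2) = a (j + 1) * (z + w + s))
    (h0 : a 0 ∈ S) (h1 : a 1 - a 0 * z ∈ S) (j : ℕ) : a j ∈ S :=
  S.op.mem_of_chebyshev_recurrence_left (z := op z) (w := op w) (s := op s)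
    (a := fun j => op (a j)) hz hw hs (by rw [← op_mul, hzw, op_one])
    (fun j => by simp only [← op_mul, ← op_add, ha])
    h0 (by rw [← op_mul, ← op_sub]; exact h1) j

theorem inv_mul_eq_mul_inv_of_mul_eq {G₀ : Type*} [GroupWithZero G₀] {a b x y : G₀}
    (ha : a ≠ 0) (hb : b ≠ 0) (h : a * x = y * b) : a⁻¹ * y = x * b⁻¹ := by
  rw [inv_mul_eq_iff_eq_mul₀ ha, ← mul_assoc, eq_mul_inv_iff_mul_eq₀ hb, h]

theorem mul_inv_eq_inv_mul_of_mul_eq {G₀ : Type*} [GroupWithZero G₀] {a b x y : G₀}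
    (ha : a ≠ 0) (hb : b ≠ 0) (h : b * y = x * a) : y * a⁻¹ = b⁻¹ * x := by
  rw [mul_inv_eq_iff_eq_mul₀ ha, mul_assoc, eq_inv_mul_iff_mul_eq₀ hb, h]

namespace NCSystem

structure IsSolution {R : Type*} [Ring R] (k : ℕ) (u : ℤ → R) : Prop where
  even_rel : ∀ n : ℤ, Even n → u (n + 2 * k + 1) * u n = u (n + 1) * u (n + 2 * k) + 1
  odd_rel : ∀ n : ℤ, Odd n → u n * u (n + 2 * k + 1) = u (n + 2 * k) * u (n + 1) + 1

namespace IsSolution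

section Ring

variable {R : Type*} [Ring R] {k : ℕ} {u : ℤ → R}

theorem of_two_mul
    (h1 : ∀ n : ℤ, u (2 * n + 2 * k + 1) * u (2 * n) = u (2 * n + 1) * u (2 * n + 2 * k) + 1)
    (h2 : ∀ n : ℤ, u (2 * n + 1) * u (2 * n + 2 * k + 2) =
      u (2 * n + 2 * k + 1) * u (2 * n + 2) + 1) :
    IsSolution k u where
  even_rel n hn := by
    obtain ⟨m, rfl⟩ := even_iff_two_dvd.mp hn
    exact h1 m
  odd_rel n hn := by
    obtain ⟨m, rfl⟩ := hn
    convert h2 m using 3 <;> ring_nf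

theorem shift_of_even (hs : IsSolution k u) {i : ℤ} (hi : Even i) :
    IsSolution k (fun n => u (i + n)) where
  even_rel n hn := by simpa only [add_assoc] using hs.even_rel (i + n) (hi.add hn)
  odd_rel n hn := by simpa only [add_assoc] using hs.odd_rel (i + n) (hi.add_odd hn)

theorem op_shift_of_odd (hs : IsSolution k u) {i : ℤ} (hi : Odd i) :
    IsSolution k (fun n => op (u (i + n))) where
  even_rel n hn := by
    simpa only [add_assoc, ← op_mul, ← op_add, ← op_one] using
      congrArg op (hs.odd_rel (i + n) (hi.add_even hn))
  odd_rel n hn := by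
    simpa only [add_assoc, ← op_mul, ← op_add, ← op_one] using
      congrArg op (hs.even_rel (i + n) (hi.add_odd hn))

theorem reflect (hs : IsSolution k u) : IsSolution k (fun n => u (2 * k - n)) where
  even_rel n hn := by
    convert hs.odd_rel (-n - 1) (by rcases hn with ⟨m, rfl⟩; exact ⟨-m - 1, by ring⟩)
      using 3 <;> ring_nf
  odd_rel n hn := by
    convert hs.even_rel (-n - 1) (by rcases hn with ⟨m, rfl⟩; exact ⟨-m - 1, by ring⟩)
      using 3 <;> ring_nf

theorem mul_add_eq_add_mul_of_even (hs : IsSolution k u) {n : ℤ} (hn : Even n) :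
    u (n + 2 * k + 1) * (u n + u (n + 4 * k)) =
      (u (n + 1) + u (n + 4 * k + 1)) * u (n + 2 * k) := by
  have h := hs.even_rel (n + 2 * k) (hn.add (even_two_mul _))
  rw [show n + 2 * k + 2 * k = n + 4 * k by ring] at h
  rw [mul_add, add_mul, hs.even_rel n hn, h]
  abel

theorem mul_add_eq_add_mul_of_odd (hs : IsSolution k u) {n : ℤ} (hn : Odd n) :
    u (n + 2 * k) * (u (n + 1) + u (n + 4 * k + 1)) =
      (u n + u (n + 4 * k)) * u (n + 2 * k + 1) := by
  have h := hs.odd_rel (n + 2 * k) (hn.add_even (even_two_mul _))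
  rw [show n + 2 * k + 2 * k = n + 4 * k by ring] at h
  rw [mul_add, add_mul, h, hs.odd_rel n hn]
  abel

end Ring

end IsSolution

section DivisionRing

variable {D : Type*} [DivisionRing D]

def twistedDiv (n : ℤ) (x y : D) : D := if Even n then x * y⁻¹ else y⁻¹ * x

theorem twistedDiv_mem {S : Subsemiring D} {x y : D} (n : ℤ) (hx : x ∈ S) (hy : y⁻¹ ∈ S) :
    twistedDiv n x y ∈ S := by
  unfold twistedDiv
  split_ifs
  exacts [mul_mem hx hy, mul_mem hy hx]

theorem twistedDiv_of_even {n : ℤ} (hn : Even n) (x y : D) : twistedDiv n x y = x * y⁻¹ :=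
  if_pos hn

theorem twistedDiv_of_odd {n : ℤ} (hn : Odd n) (x y : D) : twistedDiv n x y = y⁻¹ * x :=
  if_neg (Int.not_even_iff_odd.mpr hn)

def window (k : ℕ) (u : ℤ → D) : Set D :=
  ⋃ j ∈ Set.Icc (0 : ℕ) (2 * k), ({u j, (u j)⁻¹} : Set D)

def ratio (k : ℕ) (u : ℤ → D) (n : ℤ) : D := twistedDiv n (u (n + 2 * k)) (u n)

/-- `(u n * u (n + 1))⁻¹` for even `n` and `(u (n + 1) * u n)⁻¹` for odd `n`. -/
def ratioStep (u : ℤ → D) (n : ℤ) : D := twistedDiv n (u (n + 1))⁻¹ (u n)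

def invariant (k : ℕ) (u : ℤ → D) (n : ℤ) : D :=
  twistedDiv n (u n + u (n + 4 * k)) (u (n + 2 * k))

variable {k : ℕ} {u : ℤ → D}

theorem apply_and_inv_mem_closure_window {m : ℤ} (hm : m ∈ Set.Icc 0 (2 * (k : ℤ))) :
    u m ∈ Subsemiring.closure (window k u) ∧
      (u m)⁻¹ ∈ Subsemiring.closure (window k u) := by
  lift m to ℕ using hm.1
  have hj : m ∈ Set.Icc 0 (2 * k) := ⟨m.zero_le, by have := hm.2; omega⟩
  exact ⟨Subsemiring.subset_closure (Set.mem_biUnion hj (by simp)),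
    Subsemiring.subset_closure (Set.mem_biUnion hj (by simp))⟩

theorem ratio_zero_mem_closure_window : ratio k u 0 ∈ Subsemiring.closure (window k u) :=
  twistedDiv_mem 0 (apply_and_inv_mem_closure_window ⟨by omega, by omega⟩).1
    (apply_and_inv_mem_closure_window ⟨le_rfl, by omega⟩).2

theorem inv_ratio_zero_mem_closure_window :
    (ratio k u 0)⁻¹ ∈ Subsemiring.closure (window k u) := by
  rw [ratio, twistedDiv_of_even Even.zero, mul_inv_rev, inv_inv]
  exact mul_mem (apply_and_inv_mem_closure_window ⟨le_rfl, by omega⟩).1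
    (apply_and_inv_mem_closure_window ⟨by omega, by omega⟩).2

theorem sum_ratioStep_mem_closure_window {b : ℕ} (hb : b ≤ 2 * k) :
    ∑ j ∈ range b, ratioStep u j ∈ Subsemiring.closure (window k u) :=
  sum_mem fun j hj => by
    have := mem_range.mp hj
    exact twistedDiv_mem _ (apply_and_inv_mem_closure_window ⟨by omega, by omega⟩).2
      (apply_and_inv_mem_closure_window ⟨by omega, by omega⟩).2

theorem window_reflect_subset : window k (fun n => u (2 * k - n)) ⊆ window k u := by
  intro x hx
  simp only [window, Set.mem_iUnion] at hx ⊢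
  obtain ⟨j, hj, hx⟩ := hx
  refine ⟨2 * k - j, ⟨Nat.zero_le _, Nat.sub_le _ _⟩, ?_⟩
  rwa [Nat.cast_sub hj.2, Nat.cast_mul, Nat.cast_two]

theorem window_op : window k (fun n => op (u n)) = unop ⁻¹' window k u := by
  ext x
  induction x using MulOpposite.rec'
  simp [window, ← op_inv]

theorem ratio_ne_zero (hu : ∀ n, u n ≠ 0) (n : ℤ) : ratio k u n ≠ 0 := by
  unfold ratio twistedDiv
  split_ifs <;> simp [hu]

namespace IsSolution

variable (hs : IsSolution k u) (hu : ∀ n, u n ≠ 0)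
include hs hu

theorem ratio_succ (n : ℤ) : ratio k u (n + 1) = ratio k u n + ratioStep u n := by
  rcases Int.even_or_odd n with hn | hn
  · rw [ratio, ratio, ratioStep, twistedDiv_of_even hn, twistedDiv_of_even hn,
      twistedDiv_of_odd hn.add_one, show n + 1 + 2 * k = n + 2 * k + 1 by ring, ← add_mul]
    refine inv_mul_eq_mul_inv_of_mul_eq (hu _) (hu _) ?_
    rw [mul_add, mul_inv_cancel₀ (hu _), hs.even_rel n hn]
  · rw [ratio, ratio, ratioStep, twistedDiv_of_odd hn, twistedDiv_of_odd hn,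
      twistedDiv_of_even hn.add_one, show n + 1 + 2 * k = n + 2 * k + 1 by ring, ← mul_add]
    refine mul_inv_eq_inv_mul_of_mul_eq (hu _) (hu _) ?_
    rw [add_mul, inv_mul_cancel₀ (hu _), hs.odd_rel n hn]

theorem ratio_eq_add_sum (b : ℕ) :
    ratio k u b = ratio k u 0 + ∑ j ∈ range b, ratioStep u j := by
  have h := Finset.sum_range_sub (fun j : ℕ => ratio k u j) b
  simp only [Nat.cast_add, Nat.cast_one, hs.ratio_succ hu, add_sub_cancel_left,
    Nat.cast_zero] at h
  rw [h]
  abel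

theorem invariant_succ (n : ℤ) : invariant k u (n + 1) = invariant k u n := by
  rcases Int.even_or_odd n with hn | hn
  · rw [invariant, invariant, twistedDiv_of_even hn, twistedDiv_of_odd hn.add_one,
      show n + 1 + 2 * k = n + 2 * k + 1 by ring, show n + 1 + 4 * k = n + 4 * k + 1 by ring]
    exact inv_mul_eq_mul_inv_of_mul_eq (hu _) (hu _) (hs.mul_add_eq_add_mul_of_even hn)
  · rw [invariant, invariant, twistedDiv_of_odd hn, twistedDiv_of_even hn.add_one,
      show n + 1 + 2 * k = n + 2 * k + 1 by ring, show n + 1 + 4 * k = n + 4 * k + 1 by ring]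
    exact mul_inv_eq_inv_mul_of_mul_eq (hu _) (hu _) (hs.mul_add_eq_add_mul_of_odd hn)

theorem invariant_eq (n : ℤ) :
    invariant k u n =
      ratio k u 0 + (ratio k u 0)⁻¹ + ∑ j ∈ range (2 * k), ratioStep u j := by
  have hper : Function.Periodic (invariant k u) 1 := hs.invariant_succ hu
  have h2k := hs.ratio_eq_add_sum hu (2 * k)
  push_cast at h2k
  calc invariant k u n = invariant k u 0 := by simpa using hper.int_mul_eq n
    _ = (ratio k u 0)⁻¹ + ratio k u (2 * k) := by
      rw [invariant, ratio, ratio, twistedDiv_of_even Even.zero, twistedDiv_of_even Even.zero,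
        twistedDiv_of_even (even_two_mul _), zero_add, zero_add, mul_inv_rev, inv_inv, add_mul,
        show (4 : ℤ) * k = 2 * k + 2 * k by ring]
    _ = _ := by rw [h2k]; abel

theorem apply_add_two_mul_eq_of_even {b : ℕ} (hb : Even b) :
    u (b + 2 * k) = (ratio k u 0 + ∑ j ∈ range b, ratioStep u j) * u b := by
  rw [← hs.ratio_eq_add_sum hu, ratio, twistedDiv_of_even (by exact_mod_cast hb),
    inv_mul_cancel_right₀ (hu _)]

theorem apply_add_two_mul_eq_of_odd {b : ℕ} (hb : Odd b) :
    u (b + 2 * k) = u b * (ratio k u 0 + ∑ j ∈ range b, ratioStep u j) := by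
  rw [← hs.ratio_eq_add_sum hu, ratio, twistedDiv_of_odd (by exact_mod_cast hb),
    mul_inv_cancel_left₀ (hu _)]

theorem apply_add_four_mul_eq_of_even {m : ℤ} (hm : Even m) :
    u m + u (m + 4 * k) =
      (ratio k u 0 + (ratio k u 0)⁻¹ + ∑ j ∈ range (2 * k), ratioStep u j) *
        u (m + 2 * k) := by
  rw [← hs.invariant_eq hu m, invariant, twistedDiv_of_even hm, inv_mul_cancel_right₀ (hu _)]

theorem apply_add_four_mul_eq_of_odd {m : ℤ} (hm : Odd m) :
    u m + u (m + 4 * k) =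
      u (m + 2 * k) *
        (ratio k u 0 + (ratio k u 0)⁻¹ + ∑ j ∈ range (2 * k), ratioStep u j) := by
  rw [← hs.invariant_eq hu m, invariant, twistedDiv_of_odd hm, mul_inv_cancel_left₀ (hu _)]

theorem apply_add_mul_mem_closure_window {r : ℕ} (hr : r ≤ 2 * k) (j : ℕ) :
    u (r + 2 * k * j) ∈ Subsemiring.closure (window k u) := by
  have hur : u r ∈ Subsemiring.closure (window k u) :=
    (apply_and_inv_mem_closure_window ⟨by omega, by omega⟩).1
  have hm (j : ℕ) : Even (2 * k * j : ℤ) := by simp [mul_assoc]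
  rcases Nat.even_or_odd r with hr2 | hr2
  · refine Subsemiring.mem_of_chebyshev_recurrence_left ratio_zero_mem_closure_window
      inv_ratio_zero_mem_closure_window (sum_ratioStep_mem_closure_window le_rfl)
      (inv_mul_cancel₀ (ratio_ne_zero hu 0)) (a := fun j : ℕ => u (r + 2 * k * j))
      (fun j => ?_) (by simpa using hur) ?_ j
    · convert hs.apply_add_four_mul_eq_of_even hu ((Int.even_coe_nat r).mpr hr2 |>.add (hm j))
        using 3 <;> push_cast <;> ring_nf
    · simp only [Nat.cast_zero, mul_zero, add_zero, Nat.cast_one, mul_one,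
        hs.apply_add_two_mul_eq_of_even hu hr2, add_mul, add_sub_cancel_left]
      exact mul_mem (sum_ratioStep_mem_closure_window hr) hur
  · refine Subsemiring.mem_of_chebyshev_recurrence_right ratio_zero_mem_closure_window
      inv_ratio_zero_mem_closure_window (sum_ratioStep_mem_closure_window le_rfl)
      (mul_inv_cancel₀ (ratio_ne_zero hu 0)) (a := fun j : ℕ => u (r + 2 * k * j))
      (fun j => ?_) (by simpa using hur) ?_ j
    · convert hs.apply_add_four_mul_eq_of_odd hu
        ((Int.odd_coe_nat r).mpr hr2 |>.add_even (hm j)) using 3 <;> push_cast <;> ring_nf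
    · simp only [Nat.cast_zero, mul_zero, add_zero, Nat.cast_one, mul_one,
        hs.apply_add_two_mul_eq_of_odd hu hr2, mul_add, add_sub_cancel_left]
      exact mul_mem hur (sum_ratioStep_mem_closure_window hr)

theorem apply_natCast_mem_closure_window (hk : 1 ≤ k) (n : ℕ) :
    u n ∈ Subsemiring.closure (window k u) := by
  have h := hs.apply_add_mul_mem_closure_window hu (Nat.mod_lt n (by omega : 0 < 2 * k)).le
    (n / (2 * k))
  have e : ((n % (2 * k) : ℕ) : ℤ) + 2 * k * (n / (2 * k) : ℕ) = n := by
    exact_mod_cast Nat.mod_add_div n (2 * k)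
  rwa [e] at h

theorem apply_mem_closure_window (hk : 1 ≤ k) (n : ℤ) :
    u n ∈ Subsemiring.closure (window k u) := by
  rcases le_or_gt 0 n with hn | hn
  · lift n to ℕ using hn
    exact hs.apply_natCast_mem_closure_window hu hk n
  · obtain ⟨m, hm⟩ : ∃ m : ℕ, (m : ℤ) = 2 * k - n := ⟨(2 * k - n).toNat, by omega⟩
    have h := hs.reflect.apply_natCast_mem_closure_window (fun _ => hu _) hk m
    rw [hm, sub_sub_cancel] at h
    exact Subsemiring.closure_mono window_reflect_subset h

end IsSolution

end DivisionRing

end NCSystem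

/-- Theorem 6.2 of Di Francesco–Kedem (Laurent positivity for the noncommutative rank
`2k+1` system): every `u_n` lies in the subsemiring of `D` generated by
`u_i^{±1}, u_{i+1}^{±1}, …, u_{i+2k}^{±1}`, for any initial data `(u_i, …, u_{i+2k})`. -/
theorem stmt18 {D : Type*} [DivisionRing D] (k : ℕ) (hk : 1 ≤ k)
    (u : ℤ → D) (hu : ∀ n : ℤ, u n ≠ 0)
    (h1 : ∀ n : ℤ, u (2 * n + 2 * k + 1) * u (2 * n) = u (2 * n + 1) * u (2 * n + 2 * k) + 1)
    (h2 : ∀ n : ℤ, u (2 * n + 1) * u (2 * n + 2 * k + 2) =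
      u (2 * n + 2 * k + 1) * u (2 * n + 2) + 1) :
    ∀ n i : ℤ,
      u n ∈ Subsemiring.closure
        (⋃ j ∈ Set.Icc (0 : ℕ) (2 * k), ({u (i + j), (u (i + j))⁻¹} : Set D)) := by
  have hs : NCSystem.IsSolution k u := .of_two_mul h1 h2
  intro n i
  obtain ⟨j, rfl⟩ : ∃ j, n = i + j := ⟨n - i, by ring⟩
  rcases Int.even_or_odd i with hi | hi
  · exact (hs.shift_of_even hi).apply_mem_closure_window (fun _ => hu _) hk j
  · have h := (hs.op_shift_of_odd hi).apply_mem_closure_window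
      (fun _ => (op_ne_zero_iff _).mpr (hu _)) hk j
    rwa [NCSystem.window_op (u := fun m => u (i + m)), ← Subsemiring.op_closure] at h
end
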